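/- arXiv:2210.07800 — 3 statements merged into one kernel-verified Lean document; each statement's English description precedes it below -/
import Mathlib

section
/- Suppose y = Φx where x ∈ ℝ^N is K-sparse with 2 ≤ K ≤ K̄, Φ has restricted isometry constant δ := δ_{2K̄+K} of order 2K̄+K satisfying δ < 1/(1+(3+5R)√(2K)), and 0 < ε < ((1−δ)/(1+δ)²)·(a_K(δ)·x_min − b(δ)·x_max)². Set ρ = √2δ/√(1−δ²) and γ = √2/√(1−δ²), and let T₁ = min{t ≥ 1 : K_t ≥ K}. Then the MCHTP iterates satisfy ‖x^t − x‖ ≤ ρ‖x^{t−1} − x‖ + γ‖x_{Γ̄_t}‖ for every 1 ≤ t < T₁, where Γ_t is a top-K_t support of x, and ‖x^t − x‖ ≤ ρ‖x^{t−1} − x‖ for every t ≥ T₁. Consequently, if ρ < 1 and T₁ is finite, then x^t → x as t → ∞. -/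
open Finset

noncomputable section

/-- The Euclidean (ℓ₂) norm of a vector in `Fin n → ℝ`. -/
def l2norm {n : ℕ} (v : Fin n → ℝ) : ℝ := Real.sqrt (∑ i, (v i) ^ 2)

/-- The sparsity `‖v‖₀` of a vector: the number of its nonzero entries. -/
def sparsity {n : ℕ} (v : Fin n → ℝ) : ℕ := (Finset.univ.filter fun i => v i ≠ 0).card

/-- The support of a vector, as a `Finset`. -/
def suppF {n : ℕ} (v : Fin n → ℝ) : Finset (Fin n) := Finset.univ.filter fun i => v i ≠ 0

/-- `restr v S` is the vector agreeing with `v` on `S` and zero outside `S`. -/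
def restr {n : ℕ} (v : Fin n → ℝ) (S : Finset (Fin n)) : Fin n → ℝ :=
  fun i => if i ∈ S then v i else 0

/-- `Φ` has restricted isometry constant `δ < 1` of order `s`:
`(1-δ)‖z‖² ≤ ‖Φz‖² ≤ (1+δ)‖z‖²` for every `s`-sparse `z`. -/
def HasRIC {M N : ℕ} (Φ : Matrix (Fin M) (Fin N) ℝ) (s : ℕ) (δ : ℝ) : Prop :=
  δ < 1 ∧ ∀ z : Fin N → ℝ, sparsity z ≤ s →
    (1 - δ) * (l2norm z) ^ 2 ≤ (l2norm (Φ.mulVec z)) ^ 2 ∧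
      (l2norm (Φ.mulVec z)) ^ 2 ≤ (1 + δ) * (l2norm z) ^ 2

/-- `Λ` is a top-`k` support of `v`: `|Λ| = k` and every entry of `v` inside `Λ`
dominates (in magnitude) every entry outside `Λ`. -/
def IsTopSupport {n : ℕ} (v : Fin n → ℝ) (k : ℕ) (Λ : Finset (Fin n)) : Prop :=
  Λ.card = k ∧ ∀ i ∈ Λ, ∀ j ∉ Λ, |v j| ≤ |v i|

/-- `x'` is a least-squares estimate of `y` on the support `Λ`. -/
def IsLSE {M N : ℕ} (Φ : Matrix (Fin M) (Fin N) ℝ) (y : Fin M → ℝ)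
    (Λ : Finset (Fin N)) (x' : Fin N → ℝ) : Prop :=
  suppF x' ⊆ Λ ∧ ∀ z : Fin N → ℝ, suppF z ⊆ Λ →
    l2norm (y - Φ.mulVec x') ≤ l2norm (y - Φ.mulVec z)

/-- The data generated by a run of the MCHTP algorithm (step size `μ = 1`):
`Kbar` is the sparsity upper bound, `eps` the threshold, `Phi` the measurement
matrix, `y` the measurements; `Ksam t` is the sparsity `K_{t,1}` sampled at
iteration `t ≥ 1`, `Lam t i` the support `Λ_{t,i}`, `xint t i` the intermediate
estimate `x^t_i`, `isel t` the selected index `i_t`, and `Ksel t`, `xsel t` the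
selected sparsity `K_t` and estimate `x^t`. -/
structure MCHTP (M N : ℕ) where
  Kbar : ℕ
  eps : ℝ
  Phi : Matrix (Fin M) (Fin N) ℝ
  y : Fin M → ℝ
  Ksam : ℕ → ℕ
  Lam : ℕ → Fin 2 → Finset (Fin N)
  xint : ℕ → Fin 2 → Fin N → ℝ
  isel : ℕ → Fin 2
  Ksel : ℕ → ℕ
  xsel : ℕ → Fin N → ℝ

namespace MCHTP

variable {M N : ℕ}

/-- The two candidate sparsities at iteration `t`: `K_{t,0} = K_{t-1}` and
`K_{t,1}` is the sampled one. -/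
def Kti (A : MCHTP M N) (t : ℕ) (i : Fin 2) : ℕ :=
  if i = 0 then A.Ksel (t - 1) else A.Ksam t

/-- The squared residual error `E_{t,i} = ‖y − Φx^t_i‖²`. -/
def E (A : MCHTP M N) (t : ℕ) (i : Fin 2) : ℝ :=
  (l2norm (A.y - A.Phi.mulVec (A.xint t i))) ^ 2

/-- The absolute error difference `ΔE_t = |E_{t,1} − E_{t,0}|`. -/
def dE (A : MCHTP M N) (t : ℕ) : ℝ := |A.E t 1 - A.E t 0|

/-- The defining dynamics of MCHTP (with step size `μ = 1`): initialization
`x⁰ = 0`, `K₀ = 0`; at each `t ≥ 1` the sampled sparsity lies in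
`{1,…,K̄} \ {K_{t-1}}`; `Λ_{t,i}` is a top-`K_{t,i}` support of
`x^{t-1} + Φᵀ(y − Φx^{t-1})` and `x^t_i` a least-squares estimate of `y` on it;
if `ΔE_t > ε` the index with the smaller error is selected, otherwise the one
with the larger error; `K_t` and `x^t` are the selected values. -/
def Valid (A : MCHTP M N) : Prop :=
  A.xsel 0 = 0 ∧ A.Ksel 0 = 0 ∧ 0 < A.eps ∧
    ∀ t, 1 ≤ t →
      (A.Ksam t ∈ Finset.Icc 1 A.Kbar ∧ A.Ksam t ≠ A.Ksel (t - 1)) ∧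
      (∀ i : Fin 2,
        IsTopSupport
          (A.xsel (t - 1) +
            A.Phi.transpose.mulVec (A.y - A.Phi.mulVec (A.xsel (t - 1))))
          (A.Kti t i) (A.Lam t i) ∧
        IsLSE A.Phi A.y (A.Lam t i) (A.xint t i)) ∧
      ((A.eps < A.dE t → ∀ j, A.E t (A.isel t) ≤ A.E t j) ∧
        (A.dE t ≤ A.eps → ∀ j, A.E t j ≤ A.E t (A.isel t))) ∧
      A.Ksel t = A.Kti t (A.isel t) ∧
      A.xsel t = A.xint t (A.isel t)

end MCHTP

namespace Aux
variable {n m : ℕ}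
def dot (u v : Fin n → ℝ) : ℝ := ∑ i, u i * v i
lemma l2_sq (v : Fin n → ℝ) : (l2norm v) ^ 2 = ∑ i, (v i)^2 := by
  rw [l2norm, Real.sq_sqrt]; positivity
lemma l2_nonneg (v : Fin n → ℝ) : 0 ≤ l2norm v := Real.sqrt_nonneg _
lemma mem_suppF {v : Fin n → ℝ} {i : Fin n} : i ∈ suppF v ↔ v i ≠ 0 := by simp [suppF]
lemma sparsity_le_of_supp {v : Fin n → ℝ} {T : Finset (Fin n)} (h : suppF v ⊆ T) :
    sparsity v ≤ T.card := Finset.card_le_card h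

lemma l2_add_sq (u w : Fin n → ℝ) :
    (l2norm (u + w))^2 = (l2norm u)^2 + 2 * dot u w + (l2norm w)^2 := by
  have h : ∀ i : Fin n, ((u + w) i)^2 = u i^2 + 2*(u i * w i) + w i ^2 := by
    intro i; simp [Pi.add_apply]; ring
  simp_rw [l2_sq, h, Finset.sum_add_distrib, dot, Finset.mul_sum]

lemma l2_sub_sq (u w : Fin n → ℝ) :
    (l2norm (u - w))^2 = (l2norm u)^2 - 2 * dot u w + (l2norm w)^2 := by
  have h : ∀ i : Fin n, ((u - w) i)^2 = u i^2 - 2*(u i * w i) + w i ^2 := by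
    intro i; simp [Pi.sub_apply]; ring
  simp_rw [l2_sq, h, dot, Finset.mul_sum]
  rw [Finset.sum_add_distrib, Finset.sum_sub_distrib]

lemma suppF_add (u w : Fin n → ℝ) : suppF (u + w) ⊆ suppF u ∪ suppF w := by
  intro i hi
  rw [mem_suppF] at hi
  rw [Finset.mem_union, mem_suppF, mem_suppF]
  by_contra h
  push_neg at h
  exact hi (by simp [Pi.add_apply, h.1, h.2])

lemma suppF_sub (u w : Fin n → ℝ) : suppF (u - w) ⊆ suppF u ∪ suppF w := by
  intro i hi
  rw [mem_suppF] at hi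
  rw [Finset.mem_union, mem_suppF, mem_suppF]
  by_contra h
  push_neg at h
  exact hi (by simp [Pi.sub_apply, h.1, h.2])

lemma suppF_smul (c : ℝ) (u : Fin n → ℝ) : suppF (c • u) ⊆ suppF u := by
  intro i hi; rw [mem_suppF] at hi ⊢
  intro h; exact hi (by simp [Pi.smul_apply, h])

lemma l2_smul (c : ℝ) (u : Fin n → ℝ) : l2norm (c • u) = |c| * l2norm u := by
  have h : ∀ i : Fin n, ((c • u) i)^2 = c^2 * (u i)^2 := by intro i; simp [Pi.smul_apply]; ring
  unfold l2norm
  simp_rw [h, ← Finset.mul_sum, Real.sqrt_mul (sq_nonneg c), Real.sqrt_sq_eq_abs]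

lemma dot_smul (a b : ℝ) (u w : Fin n → ℝ) : dot (a • u) (b • w) = a * b * dot u w := by
  unfold dot; rw [Finset.mul_sum]; apply Finset.sum_congr rfl; intros; simp; ring

lemma l2_eq_zero {u : Fin n → ℝ} (h : l2norm u = 0) : u = 0 := by
  have hs : ∑ i, (u i)^2 = 0 := by
    have h2 := l2_sq u; rw [h] at h2; simpa using h2.symm
  funext i
  have := (Finset.sum_eq_zero_iff_of_nonneg (fun i _ => sq_nonneg (u i))).1 hs i (Finset.mem_univ i)
  exact pow_eq_zero_iff (two_ne_zero) |>.1 this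

variable {Φ : Matrix (Fin m) (Fin n) ℝ} {s : ℕ} {δ : ℝ}

lemma ric_abs (hR : HasRIC Φ s δ) {z : Fin n → ℝ} (hz : sparsity z ≤ s) :
    |(l2norm (Φ.mulVec z))^2 - (l2norm z)^2| ≤ δ * (l2norm z)^2 := by
  obtain ⟨-, h⟩ := hR
  obtain ⟨h1, h2⟩ := h z hz
  rw [abs_le]; constructor <;> nlinarith

lemma ric_dot_half (hR : HasRIC Φ s δ) {u w : Fin n → ℝ} {T : Finset (Fin n)}
    (hu : suppF u ⊆ T) (hw : suppF w ⊆ T) (hT : T.card ≤ s) :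
    |dot (Φ.mulVec u) (Φ.mulVec w) - dot u w| ≤ δ / 2 * ((l2norm u)^2 + (l2norm w)^2) := by
  have hadd : sparsity (u + w) ≤ s :=
    le_trans (sparsity_le_of_supp ((suppF_add u w).trans (Finset.union_subset hu hw))) hT
  have hsub : sparsity (u - w) ≤ s :=
    le_trans (sparsity_le_of_supp ((suppF_sub u w).trans (Finset.union_subset hu hw))) hT
  have e1 := ric_abs hR hadd
  have e2 := ric_abs hR hsub
  have m1 : Φ.mulVec (u + w) = Φ.mulVec u + Φ.mulVec w := Matrix.mulVec_add Φ u w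
  have m2 : Φ.mulVec (u - w) = Φ.mulVec u - Φ.mulVec w := Matrix.mulVec_sub Φ u w
  rw [m1, l2_add_sq, l2_add_sq] at e1
  rw [m2, l2_sub_sq, l2_sub_sq] at e2
  rw [abs_le] at e1 e2 ⊢
  constructor <;> nlinarith

lemma ric_dot (hR : HasRIC Φ s δ) (hδ0 : 0 ≤ δ) {u w : Fin n → ℝ} {T : Finset (Fin n)}
    (hu : suppF u ⊆ T) (hw : suppF w ⊆ T) (hT : T.card ≤ s) :
    |dot (Φ.mulVec u) (Φ.mulVec w) - dot u w| ≤ δ * l2norm u * l2norm w := by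
  have l2z : l2norm (0 : Fin n → ℝ) = 0 := by simp [l2norm]
  rcases eq_or_ne (l2norm u) 0 with h0 | h0
  · rw [l2_eq_zero h0]
    simp [dot, Matrix.mulVec_zero, l2z]
  rcases eq_or_ne (l2norm w) 0 with h1 | h1
  · rw [l2_eq_zero h1]
    simp [dot, Matrix.mulVec_zero, l2z]
  have hupos : 0 < l2norm u := lt_of_le_of_ne (l2_nonneg u) (Ne.symm h0)
  have hwpos : 0 < l2norm w := lt_of_le_of_ne (l2_nonneg w) (Ne.symm h1)
  set c : ℝ := Real.sqrt (l2norm w / l2norm u) with hc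
  have hcpos : 0 < c := Real.sqrt_pos.2 (by positivity)
  have hc2 : c^2 = l2norm w / l2norm u := Real.sq_sqrt (by positivity)
  have key := ric_dot_half hR (T := T) ((suppF_smul c u).trans hu)
    ((suppF_smul c⁻¹ w).trans hw) hT
  rw [Matrix.mulVec_smul, Matrix.mulVec_smul] at key
  have d1 : dot (c • Φ.mulVec u) (c⁻¹ • Φ.mulVec w) = dot (Φ.mulVec u) (Φ.mulVec w) := by
    rw [dot_smul, mul_inv_cancel₀ (ne_of_gt hcpos), one_mul]
  have d2 : dot (c • u) (c⁻¹ • w) = dot u w := by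
    rw [dot_smul, mul_inv_cancel₀ (ne_of_gt hcpos), one_mul]
  rw [d1, d2, l2_smul, l2_smul] at key
  have habs : |c| = c := abs_of_pos hcpos
  have habs' : |c⁻¹| = c⁻¹ := abs_of_pos (by positivity)
  rw [habs, habs'] at key
  have : δ / 2 * ((c * l2norm u)^2 + (c⁻¹ * l2norm w)^2) = δ * l2norm u * l2norm w := by
    have h1 : (c * l2norm u)^2 = l2norm w * l2norm u := by
      rw [mul_pow, hc2]; field_simp
    have h2 : (c⁻¹ * l2norm w)^2 = l2norm u * l2norm w := by
      rw [mul_pow, inv_pow, hc2]; field_simp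
    rw [h1, h2]; ring
  linarith [key, this.symm.le]

lemma l2_le_of_sq {u v : Fin n → ℝ} (hu : (l2norm u)^2 ≤ (l2norm v)^2) :
    l2norm u ≤ l2norm v := by
  rw [← Real.sqrt_sq (l2_nonneg u), ← Real.sqrt_sq (l2_nonneg v)]
  exact Real.sqrt_le_sqrt hu

lemma dot_sub_right (w a b : Fin n → ℝ) : dot w (a - b) = dot w a - dot w b := by
  unfold dot; rw [← Finset.sum_sub_distrib]; apply Finset.sum_congr rfl; intros; simp; ring

lemma dot_smul_right (t : ℝ) (a b : Fin n → ℝ) : dot a (t • b) = t * dot a b := by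
  unfold dot; rw [Finset.mul_sum]; apply Finset.sum_congr rfl; intros; simp; ring

lemma toE_norm (v : Fin n → ℝ) : l2norm v = ‖(WithLp.equiv 2 (Fin n → ℝ)).symm v‖ := by
  rw [EuclideanSpace.norm_eq, l2norm]
  congr 1; apply Finset.sum_congr rfl; intro i _; rw [Real.norm_eq_abs, sq_abs]; rfl

lemma l2_triangle (u v : Fin n → ℝ) : l2norm (u + v) ≤ l2norm u + l2norm v := by
  rw [toE_norm, toE_norm, toE_norm]
  exact norm_add_le _ _

lemma dot_self (v : Fin n → ℝ) : dot v v = (l2norm v)^2 := by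
  rw [l2_sq]; unfold dot; apply Finset.sum_congr rfl; intros; ring

lemma dot_comm (u v : Fin n → ℝ) : dot u v = dot v u := by
  unfold dot; apply Finset.sum_congr rfl; intros; ring

lemma dot_mulVec (Φ : Matrix (Fin m) (Fin n) ℝ) (u : Fin m → ℝ) (w : Fin n → ℝ) :
    dot u (Φ.mulVec w) = dot (Φ.transpose.mulVec u) w := by
  show dotProduct u (Φ.mulVec w) = dotProduct (Φ.transpose.mulVec u) w
  rw [Matrix.dotProduct_mulVec, Matrix.mulVec_transpose]

lemma suppF_restr (v : Fin n → ℝ) (S : Finset (Fin n)) : suppF (restr v S) ⊆ S := by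
  intro i hi; rw [mem_suppF] at hi; by_contra h; exact hi (by simp [restr, h])

lemma restr_sq (v : Fin n → ℝ) (S : Finset (Fin n)) :
    (l2norm (restr v S))^2 = ∑ i ∈ S, (v i)^2 := by
  rw [l2_sq]
  rw [← Finset.sum_filter_add_sum_filter_not Finset.univ (· ∈ S)]
  have h1 : ∀ i ∈ Finset.univ.filter (· ∈ S), (restr v S i)^2 = (v i)^2 := by
    intro i hi; simp at hi; simp [restr, hi]
  have h2 : ∀ i ∈ Finset.univ.filter (¬ · ∈ S), (restr v S i)^2 = 0 := by
    intro i hi; simp at hi; simp [restr, hi]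
  rw [Finset.sum_congr rfl h1, Finset.sum_congr rfl h2]
  simp [Finset.filter_mem_eq_inter]

lemma restr_add (a b : Fin n → ℝ) (S : Finset (Fin n)) :
    restr (a + b) S = restr a S + restr b S := by
  funext i; simp only [restr, Pi.add_apply]; split <;> simp

lemma restr_sub (a b : Fin n → ℝ) (S : Finset (Fin n)) :
    restr (a - b) S = restr a S - restr b S := by
  funext i; simp only [restr, Pi.sub_apply]; split <;> simp

lemma l2_split (v : Fin n → ℝ) (S : Finset (Fin n)) :
    (l2norm v)^2 = (l2norm (restr v S))^2 + (l2norm (restr v Sᶜ))^2 := by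
  rw [l2_sq, restr_sq, restr_sq, Finset.sum_add_sum_compl]

lemma restr_mono {v : Fin n → ℝ} {A B : Finset (Fin n)} (h : A ⊆ B) :
    l2norm (restr v A) ≤ l2norm (restr v B) := by
  apply l2_le_of_sq
  rw [restr_sq, restr_sq]
  exact Finset.sum_le_sum_of_subset_of_nonneg h (fun i _ _ => sq_nonneg _)

/-- orthogonality from least squares -/
lemma lse_orth {Φ : Matrix (Fin m) (Fin n) ℝ} {y : Fin m → ℝ} {Λ : Finset (Fin n)}
    {x' : Fin n → ℝ} (h : IsLSE Φ y Λ x') {z : Fin n → ℝ} (hz : suppF z ⊆ Λ) :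
    dot (y - Φ.mulVec x') (Φ.mulVec z) = 0 := by
  set a : Fin m → ℝ := y - Φ.mulVec x' with ha
  set c : ℝ := dot a (Φ.mulVec z) with hc
  set d : ℝ := (l2norm (Φ.mulVec z))^2 with hd
  have hd0 : 0 ≤ d := by rw [hd]; positivity
  have key : ∀ t : ℝ, 2 * (t * c) ≤ t^2 * d := by
    intro t
    have hsupp : suppF (x' + t • z) ⊆ Λ :=
      (suppF_add x' (t • z)).trans (Finset.union_subset h.1 ((suppF_smul t z).trans hz))
    have hle := h.2 (x' + t • z) hsupp
    have heq : y - Φ.mulVec (x' + t • z) = a - t • Φ.mulVec z := by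
      rw [Matrix.mulVec_add, Matrix.mulVec_smul, ha]
      funext i; simp; ring
    rw [heq] at hle
    have hrhs : (l2norm (a - t • Φ.mulVec z))^2 = (l2norm a)^2 - 2*(t*c) + t^2*d := by
      rw [l2_sub_sq, dot_smul_right, l2_smul, mul_pow, sq_abs, hc, hd]; try ring
    have hsq : (l2norm a)^2 ≤ (l2norm a)^2 - 2*(t*c) + t^2*d := by
      rw [← hrhs]
      exact pow_le_pow_left₀ (l2_nonneg _) hle 2
    linarith
  by_contra hc0
  set t : ℝ := c / (d + 1) with htdef
  have h1 := key t
  have hd1 : 0 < d + 1 := by linarith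
  have hcc : 0 < c^2 := by positivity
  have ht : t * (d+1) = c := div_mul_cancel₀ c hd1.ne'
  have h2 : 2 * (t * (t * (d+1))) ≤ t^2 * d := by rw [ht]; exact h1
  have h3 : t^2 * (d + 2) ≤ 0 := by nlinarith
  have ht0 : t = 0 := by nlinarith [sq_nonneg t, hd0]
  apply hc0
  rw [← ht, ht0]; ring

/-- the (I - ΦᵀΦ) bound -/
lemma offdiag (hR : HasRIC Φ s δ) (hδ0 : 0 ≤ δ) {d : Fin n → ℝ} {T : Finset (Fin n)}
    (hcard : (T ∪ suppF d).card ≤ s) :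
    l2norm (restr (d - Φ.transpose.mulVec (Φ.mulVec d)) T) ≤ δ * l2norm d := by
  set w := restr (d - Φ.transpose.mulVec (Φ.mulVec d)) T with hw
  have hwsupp : suppF w ⊆ T := suppF_restr _ _
  have hkey : (l2norm w)^2 = dot w d - dot (Φ.mulVec w) (Φ.mulVec d) := by
    have e1 : dot w w = dot w (d - Φ.transpose.mulVec (Φ.mulVec d)) := by
      unfold dot
      apply Finset.sum_congr rfl
      intro i _
      rcases em (i ∈ T) with h | h
      · rw [hw]; simp [restr, h]
      · rw [hw]; simp [restr, h]
    have e2 : dot w (Φ.transpose.mulVec (Φ.mulVec d)) = dot (Φ.mulVec w) (Φ.mulVec d) := by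
      rw [dot_mulVec, Matrix.transpose_transpose]
    rw [← dot_self, e1, dot_sub_right, e2]
  have hric := ric_dot hR hδ0 (T := T ∪ suppF d)
    (hwsupp.trans (Finset.subset_union_left)) (Finset.subset_union_right) hcard
  have h2 : (l2norm w)^2 ≤ δ * l2norm w * l2norm d := by
    have : dot w d - dot (Φ.mulVec w) (Φ.mulVec d) ≤ |dot (Φ.mulVec w) (Φ.mulVec d) - dot w d| := by
      rw [abs_sub_comm]; exact le_abs_self _
    calc (l2norm w)^2 = dot w d - dot (Φ.mulVec w) (Φ.mulVec d) := hkey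
      _ ≤ |dot (Φ.mulVec w) (Φ.mulVec d) - dot w d| := this
      _ ≤ δ * l2norm w * l2norm d := hric
  rcases eq_or_lt_of_le (l2_nonneg w) with h0 | h0
  · rw [← h0]
    exact mul_nonneg hδ0 (l2_nonneg d)
  · nlinarith [h2, h0]

/-- LSE restriction bound -/
lemma lse_restr (hR : HasRIC Φ s δ) (hδ0 : 0 ≤ δ) {x x' : Fin n → ℝ} {Λ : Finset (Fin n)}
    (hLSE : IsLSE Φ (Φ.mulVec x) Λ x')
    (hcard : (Λ ∪ suppF (x - x')).card ≤ s) :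
    l2norm (restr (x - x') Λ) ≤ δ * l2norm (x - x') := by
  set v := x - x' with hv
  set z := restr v Λ with hz
  have hzsupp : suppF z ⊆ Λ := suppF_restr _ _
  have horth : dot (Φ.mulVec v) (Φ.mulVec z) = 0 := by
    have := lse_orth hLSE hzsupp
    rw [← Matrix.mulVec_sub] at this
    exact this
  have hkey : (l2norm z)^2 = dot v z := by
    have e1 : dot z z = dot z v := by
      unfold dot
      apply Finset.sum_congr rfl
      intro i _
      rcases em (i ∈ Λ) with h | h
      · rw [hz]; simp [restr, h]
      · rw [hz]; simp [restr, h]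
    rw [← dot_self, e1, dot_comm]
  have hric := ric_dot hR hδ0 (T := Λ ∪ suppF v)
    (hzsupp.trans (Finset.subset_union_left)) (Finset.subset_union_right) hcard
  have h2 : (l2norm z)^2 ≤ δ * l2norm z * l2norm v := by
    have habs : dot z v ≤ |dot (Φ.mulVec z) (Φ.mulVec v) - dot z v| := by
      rw [dot_comm (Φ.mulVec z), horth]
      rw [abs_sub_comm]
      calc dot z v ≤ |dot z v| := le_abs_self _
        _ = |dot z v - 0| := by rw [sub_zero]
    calc (l2norm z)^2 = dot z v := by rw [hkey, dot_comm]
      _ ≤ |dot (Φ.mulVec z) (Φ.mulVec v) - dot z v| := habs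
      _ ≤ δ * l2norm z * l2norm v := hric
  rcases eq_or_lt_of_le (l2_nonneg z) with h0 | h0
  · rw [← h0]
    exact mul_nonneg hδ0 (l2_nonneg v)
  · nlinarith [h2, h0]

/-- top support sum comparison -/
lemma top_sum_le {v : Fin n → ℝ} {k : ℕ} {Λ : Finset (Fin n)} (h : IsTopSupport v k Λ)
    {A B : Finset (Fin n)} (hA : ∀ i ∈ A, i ∉ Λ) (hB : B ⊆ Λ) (hcard : A.card ≤ B.card) :
    ∑ i ∈ A, (v i)^2 ≤ ∑ i ∈ B, (v i)^2 := by
  rcases A.eq_empty_or_nonempty with hAe | hAne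
  · rw [hAe]; simp
    exact Finset.sum_nonneg (fun i _ => sq_nonneg _)
  have hBne : B.Nonempty := Finset.card_pos.1 (lt_of_lt_of_le (Finset.card_pos.2 hAne) hcard)
  set b := B.inf' hBne (fun j => (v j)^2) with hb
  have hb0 : 0 ≤ b := Finset.le_inf' hBne _ (fun j _ => sq_nonneg _)
  have h1 : ∀ i ∈ A, (v i)^2 ≤ b := by
    intro i hi
    apply Finset.le_inf' hBne
    intro j hj
    have habs := h.2 j (hB hj) i (hA i hi)
    calc (v i)^2 = |v i|^2 := (sq_abs _).symm
      _ ≤ |v j|^2 := pow_le_pow_left₀ (abs_nonneg _) habs 2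
      _ = (v j)^2 := sq_abs _
  calc ∑ i ∈ A, (v i)^2 ≤ A.card • b := Finset.sum_le_card_nsmul A _ b h1
    _ ≤ B.card • b := nsmul_le_nsmul_left hb0 hcard
    _ ≤ ∑ j ∈ B, (v j)^2 := Finset.card_nsmul_le_sum B _ b (fun j hj => Finset.inf'_le _ hj)

/-- existence of top supports -/
lemma exists_top (v : Fin n → ℝ) : ∀ k : ℕ, k ≤ n → ∃ Γ : Finset (Fin n), IsTopSupport v k Γ := by
  intro k
  induction k with
  | zero =>
    intro _
    exact ⟨∅, by simp [IsTopSupport]⟩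
  | succ k ih =>
    intro hk
    obtain ⟨Γ, hΓ⟩ := ih (by omega)
    have hne : Γᶜ.Nonempty := by
      rw [← Finset.card_pos, Finset.card_compl, hΓ.1]
      simp
      omega
    obtain ⟨j, hjmem, hjmax⟩ := Finset.exists_max_image Γᶜ (fun i => |v i|) hne
    have hjΓ : j ∉ Γ := Finset.mem_compl.1 hjmem
    refine ⟨insert j Γ, ?_, ?_⟩
    · rw [Finset.card_insert_of_notMem hjΓ, hΓ.1]
    · intro i hi l hl
      have hlj : l ≠ j := fun h => hl (h ▸ Finset.mem_insert_self j Γ)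
      have hlΓ : l ∉ Γ := fun h => hl (Finset.mem_insert_of_mem h)
      rcases Finset.mem_insert.1 hi with rfl | hiΓ
      · exact hjmax l (Finset.mem_compl.2 hlΓ)
      · exact hΓ.2 i hiΓ l hlΓ


lemma l2_sub_comm (a b : Fin n → ℝ) : l2norm (a - b) = l2norm (b - a) := by
  unfold l2norm; congr 1; apply Finset.sum_congr rfl; intros; simp [Pi.sub_apply]; ring

lemma l2_eq_of_sq {u v : Fin n → ℝ} (h : (l2norm u)^2 = (l2norm v)^2) : l2norm u = l2norm v :=
  le_antisymm (l2_le_of_sq h.le) (l2_le_of_sq h.ge)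

lemma real_le_of_sq {a b : ℝ} (ha : 0 ≤ a) (hb : 0 ≤ b) (h : a^2 ≤ b^2) : a ≤ b := by
  nlinarith

lemma sum_sqrt_le {a b : ℝ} (ha : 0 ≤ a) (hb : 0 ≤ b) :
    a + b ≤ Real.sqrt 2 * Real.sqrt (a^2 + b^2) := by
  have h2 : (a+b)^2 ≤ 2*(a^2+b^2) := by nlinarith [sq_nonneg (a-b)]
  calc a + b = Real.sqrt ((a+b)^2) := (Real.sqrt_sq (by linarith)).symm
    _ ≤ Real.sqrt (2*(a^2+b^2)) := Real.sqrt_le_sqrt h2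
    _ = Real.sqrt 2 * Real.sqrt (a^2+b^2) := Real.sqrt_mul (by norm_num) _

lemma restr_union_sq {w : Fin n → ℝ} {A B : Finset (Fin n)} (h : Disjoint A B) :
    (l2norm (restr w (A ∪ B)))^2 = (l2norm (restr w A))^2 + (l2norm (restr w B))^2 := by
  rw [restr_sq, restr_sq, restr_sq, Finset.sum_union h]

lemma two_restr_le {w : Fin n → ℝ} {A B : Finset (Fin n)} (h : Disjoint A B) :
    l2norm (restr w A) + l2norm (restr w B) ≤ Real.sqrt 2 * l2norm (restr w (A ∪ B)) := by
  have := sum_sqrt_le (l2_nonneg (restr w A)) (l2_nonneg (restr w B))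
  calc l2norm (restr w A) + l2norm (restr w B)
      ≤ Real.sqrt 2 * Real.sqrt ((l2norm (restr w A))^2 + (l2norm (restr w B))^2) := this
    _ = Real.sqrt 2 * l2norm (restr w (A ∪ B)) := by
        rw [← restr_union_sq h, Real.sqrt_sq (l2_nonneg _)]

lemma restr_compl_eq {x x' : Fin n → ℝ} {Λ : Finset (Fin n)} (h : suppF x' ⊆ Λ) :
    restr (x - x') Λᶜ = restr x Λᶜ := by
  funext i
  simp only [restr]
  split
  · next hm =>
      have hnew : x' i = 0 := by
        by_contra hne
        exact (Finset.mem_compl.1 hm) (h (mem_suppF.2 hne))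
      simp [Pi.sub_apply, hnew]
  · rfl

/-- Master bound : if the off-`Λ` part of `x` is bounded by `W`, then the error is
bounded by `W / √(1-δ²)`. -/
lemma iter_master (hR : HasRIC Φ s δ) (hδ0 : 0 ≤ δ)
    {x xnew : Fin n → ℝ} {Λ : Finset (Fin n)} {T0 : Finset (Fin n)}
    (hLSE : IsLSE Φ (Φ.mulVec x) Λ xnew)
    (hcard : (Λ ∪ (suppF x ∪ T0)).card ≤ s)
    {W : ℝ} (hW0 : 0 ≤ W)
    (hW : l2norm (restr x Λᶜ) ≤ W) :
    l2norm (xnew - x) ≤ W / Real.sqrt (1 - δ^2) := by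
  set v := x - xnew with hv
  have hδ2 : 0 < 1 - δ^2 := by nlinarith [hR.1]
  have hxv : l2norm (xnew - x) = l2norm v := l2_sub_comm xnew x
  have hvsupp : suppF v ⊆ suppF x ∪ Λ :=
    (suppF_sub x xnew).trans (Finset.union_subset_union_right hLSE.1)
  have hc1 : (Λ ∪ suppF v).card ≤ s := by
    apply le_trans (Finset.card_le_card _) hcard
    intro i hi
    rcases Finset.mem_union.1 hi with h | h
    · exact Finset.mem_union_left _ h
    · rcases Finset.mem_union.1 (hvsupp h) with h' | h'
      · exact Finset.mem_union_right _ (Finset.mem_union_left _ h')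
      · exact Finset.mem_union_left _ h'
  have hP3 := lse_restr hR hδ0 hLSE hc1
  have hvΛc : restr v Λᶜ = restr x Λᶜ := by
    funext i
    simp only [restr]
    split
    · next h =>
        have hnew : xnew i = 0 := by
          by_contra hne
          exact (Finset.mem_compl.1 h) (hLSE.1 (mem_suppF.2 hne))
        rw [hv]; simp [Pi.sub_apply, hnew]
    · rfl
  have hsplit := l2_split v Λ
  have a1 : (l2norm (restr v Λ))^2 ≤ (δ * l2norm v)^2 :=
    pow_le_pow_left₀ (l2_nonneg _) hP3 2
  have a2 : (l2norm (restr v Λᶜ))^2 ≤ W^2 := by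
    rw [hvΛc]; exact pow_le_pow_left₀ (l2_nonneg _) hW 2
  have h2 : (1 - δ^2) * (l2norm v)^2 ≤ W^2 := by nlinarith
  rw [hxv]
  have hsq : 0 < Real.sqrt (1 - δ^2) := Real.sqrt_pos.2 hδ2
  rw [le_div_iff₀ hsq]
  apply real_le_of_sq (mul_nonneg (l2_nonneg _) hsq.le) hW0
  rw [mul_pow, Real.sq_sqrt hδ2.le]
  nlinarith [l2_nonneg v]

/-- Case A off-support bound : when `(suppF x).card ≤ k`. -/
lemma offL_caseA (hR : HasRIC Φ s δ) (hδ0 : 0 ≤ δ)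
    {x xprev : Fin n → ℝ} {Λ : Finset (Fin n)} {k : ℕ}
    (htop : IsTopSupport (xprev + Φ.transpose.mulVec (Φ.mulVec x - Φ.mulVec xprev)) k Λ)
    (hk : (suppF x).card ≤ k)
    (hcard : (Λ ∪ (suppF x ∪ suppF xprev)).card ≤ s) :
    l2norm (restr x Λᶜ) ≤ Real.sqrt 2 * δ * l2norm (x - xprev) := by
  set u := xprev + Φ.transpose.mulVec (Φ.mulVec x - Φ.mulVec xprev) with hu
  set d := x - xprev with hd
  set S := suppF x with hS
  have hxu : x - u = d - Φ.transpose.mulVec (Φ.mulVec d) := by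
    rw [hu, hd, ← Matrix.mulVec_sub]
    funext i; simp [Pi.sub_apply, Pi.add_apply]; ring
  have hdsupp : suppF d ⊆ S ∪ suppF xprev := suppF_sub x xprev
  -- reduce to S \ Λ
  have hred : l2norm (restr x Λᶜ) = l2norm (restr x (S \ Λ)) := by
    apply l2_eq_of_sq
    rw [restr_sq, restr_sq]
    apply (Finset.sum_subset ?_ ?_).symm
    · intro i hi
      exact Finset.mem_compl.2 (Finset.mem_sdiff.1 hi).2
    · intro i _ hi
      rcases em (i ∈ S) with hiS | hiS
      · exfalso
        exact hi (Finset.mem_sdiff.2 ⟨hiS, fun h => (Finset.mem_compl.1 (by assumption)) h⟩)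
      · have : x i = 0 := by
          by_contra hne; exact hiS (mem_suppF.2 hne)
        simp [this]
  rw [hred]
  -- triangle through u
  have e0 : restr x (S \ Λ) = restr (x - u) (S \ Λ) + restr u (S \ Λ) := by
    rw [← restr_add, sub_add_cancel]
  have t1 : l2norm (restr x (S \ Λ)) ≤
      l2norm (restr (x - u) (S \ Λ)) + l2norm (restr u (S \ Λ)) := by
    rw [e0]; exact l2_triangle _ _
  -- top support comparison
  have hcards : (S \ Λ).card ≤ (Λ \ S).card := by
    have h1 : (S \ Λ).card + (S ∩ Λ).card = S.card := Finset.card_sdiff_add_card_inter S Λ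
    have h2 : (Λ \ S).card + (Λ ∩ S).card = Λ.card := Finset.card_sdiff_add_card_inter Λ S
    have h3 : (S ∩ Λ).card = (Λ ∩ S).card := by rw [Finset.inter_comm]
    have h4 : Λ.card = k := htop.1
    omega
  have t2 : l2norm (restr u (S \ Λ)) ≤ l2norm (restr u (Λ \ S)) := by
    apply l2_le_of_sq
    rw [restr_sq, restr_sq]
    exact top_sum_le htop (fun i hi => (Finset.mem_sdiff.1 hi).2) (Finset.sdiff_subset) hcards
  have t3 : l2norm (restr u (Λ \ S)) = l2norm (restr (x - u) (Λ \ S)) := by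
    have : restr u (Λ \ S) = restr (u - x) (Λ \ S) := by
      funext i
      simp only [restr]
      split
      · next h =>
          have hx0 : x i = 0 := by
            by_contra hne
            exact (Finset.mem_sdiff.1 h).2 (mem_suppF.2 hne)
          simp [Pi.sub_apply, hx0]
      · rfl
    rw [this, restr_sub, l2_sub_comm, ← restr_sub]
  have hdisj : Disjoint (S \ Λ) (Λ \ S) := disjoint_sdiff_sdiff
  have t4 : l2norm (restr (x - u) (S \ Λ)) + l2norm (restr (x - u) (Λ \ S)) ≤
      Real.sqrt 2 * l2norm (restr (x - u) ((S \ Λ) ∪ (Λ \ S))) := two_restr_le hdisj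
  have t5 : l2norm (restr (x - u) ((S \ Λ) ∪ (Λ \ S))) ≤ δ * l2norm d := by
    rw [hxu]
    apply offdiag hR hδ0
    apply le_trans (Finset.card_le_card _) hcard
    intro i hi
    rcases Finset.mem_union.1 hi with h | h
    · rcases Finset.mem_union.1 h with h' | h'
      · exact Finset.mem_union_right _ (Finset.mem_union_left _ (Finset.mem_sdiff.1 h').1)
      · exact Finset.mem_union_left _ (Finset.mem_sdiff.1 h').1
    · rcases Finset.mem_union.1 (hdsupp h) with h' | h'
      · exact Finset.mem_union_right _ (Finset.mem_union_left _ h')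
      · exact Finset.mem_union_right _ (Finset.mem_union_right _ h')
  calc l2norm (restr x (S \ Λ))
      ≤ l2norm (restr (x - u) (S \ Λ)) + l2norm (restr u (S \ Λ)) := t1
    _ ≤ l2norm (restr (x - u) (S \ Λ)) + l2norm (restr (x - u) (Λ \ S)) := by
        rw [t3] at t2; linarith
    _ ≤ Real.sqrt 2 * l2norm (restr (x - u) ((S \ Λ) ∪ (Λ \ S))) := t4
    _ ≤ Real.sqrt 2 * (δ * l2norm d) := by
        apply mul_le_mul_of_nonneg_left t5 (Real.sqrt_nonneg 2)
    _ = Real.sqrt 2 * δ * l2norm d := by ring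


/-- Case B off-support bound : with an arbitrary top-`k` support `Γ` of `x`. -/
lemma offL_caseB (hR : HasRIC Φ s δ) (hδ0 : 0 ≤ δ)
    {x xprev : Fin n → ℝ} {Λ Γ : Finset (Fin n)} {k : ℕ}
    (htop : IsTopSupport (xprev + Φ.transpose.mulVec (Φ.mulVec x - Φ.mulVec xprev)) k Λ)
    (hΓ : IsTopSupport x k Γ)
    (hcard : (Λ ∪ (suppF x ∪ suppF xprev)).card ≤ s) :
    l2norm (restr x Λᶜ) ≤
      Real.sqrt 2 * δ * l2norm (x - xprev) + Real.sqrt 2 * l2norm (restr x Γᶜ) := by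
  set u := xprev + Φ.transpose.mulVec (Φ.mulVec x - Φ.mulVec xprev) with hu
  set d := x - xprev with hd
  set S := suppF x with hS
  have hxu : x - u = d - Φ.transpose.mulVec (Φ.mulVec d) := by
    rw [hu, hd, ← Matrix.mulVec_sub]
    funext i; simp [Pi.sub_apply, Pi.add_apply]; ring
  have hdsupp : suppF d ⊆ S ∪ suppF xprev := suppF_sub x xprev
  set P := (S \ Λ) \ Γ with hP
  set Q := (S ∩ Γ) \ Λ with hQ
  -- decomposition of the off-Λ mass
  have hunion : S \ Λ = P ∪ Q := by
    ext i
    simp only [hP, hQ, Finset.mem_sdiff, Finset.mem_union, Finset.mem_inter]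
    tauto
  have hdisjPQ : Disjoint P Q := by
    rw [Finset.disjoint_left]
    intro i hi hiQ
    exact (Finset.mem_sdiff.1 hi).2 (Finset.mem_inter.1 (Finset.mem_sdiff.1 hiQ).1).2
  have hred : (l2norm (restr x Λᶜ))^2 = (l2norm (restr x P))^2 + (l2norm (restr x Q))^2 := by
    rw [restr_sq, restr_sq, restr_sq, ← Finset.sum_union hdisjPQ, ← hunion]
    apply (Finset.sum_subset ?_ ?_).symm
    · intro i hi
      exact Finset.mem_compl.2 (Finset.mem_sdiff.1 hi).2
    · intro i hic hi
      rcases em (i ∈ S) with hiS | hiS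
      · exfalso
        exact hi (Finset.mem_sdiff.2 ⟨hiS, Finset.mem_compl.1 hic⟩)
      · have : x i = 0 := by
          by_contra hne; exact hiS (mem_suppF.2 hne)
        simp [this]
  set g := l2norm (restr x Γᶜ) with hg
  have hg0 : 0 ≤ g := l2_nonneg _
  -- P-part
  have hPle : (l2norm (restr x P))^2 ≤ g^2 := by
    rw [hg, restr_sq, restr_sq]
    apply Finset.sum_le_sum_of_subset_of_nonneg ?_ (fun i _ _ => sq_nonneg _)
    intro i hi
    exact Finset.mem_compl.2 (Finset.mem_sdiff.1 hi).2
  -- Q-part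
  set aa := Real.sqrt 2 * δ * l2norm d with haa
  have haa0 : 0 ≤ aa := by
    rw [haa]
    have := l2_nonneg d
    positivity
  have hQle : l2norm (restr x Q) ≤ aa + g := by
    have e0 : restr x Q = restr (x - u) Q + restr u Q := by
      rw [← restr_add, sub_add_cancel]
    have t1 : l2norm (restr x Q) ≤ l2norm (restr (x - u) Q) + l2norm (restr u Q) := by
      rw [e0]; exact l2_triangle _ _
    have hcards : Q.card ≤ (Λ \ Γ).card := by
      have h0 : Q ⊆ Γ \ Λ := by
        intro i hi
        exact Finset.mem_sdiff.2 ⟨(Finset.mem_inter.1 (Finset.mem_sdiff.1 hi).1).2, (Finset.mem_sdiff.1 hi).2⟩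
      have h1 : (Γ \ Λ).card + (Γ ∩ Λ).card = Γ.card := Finset.card_sdiff_add_card_inter Γ Λ
      have h2 : (Λ \ Γ).card + (Λ ∩ Γ).card = Λ.card := Finset.card_sdiff_add_card_inter Λ Γ
      have h3 : (Γ ∩ Λ).card = (Λ ∩ Γ).card := by rw [Finset.inter_comm]
      have h4 : Λ.card = k := htop.1
      have h5 : Γ.card = k := hΓ.1
      have h6 := Finset.card_le_card h0
      omega
    have t2 : l2norm (restr u Q) ≤ l2norm (restr u (Λ \ Γ)) := by
      apply l2_le_of_sq
      rw [restr_sq, restr_sq]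
      exact top_sum_le htop (fun i hi => (Finset.mem_sdiff.1 hi).2) (Finset.sdiff_subset) hcards
    have t3 : l2norm (restr u (Λ \ Γ)) ≤ l2norm (restr (x - u) (Λ \ Γ)) + g := by
      have e1 : restr u (Λ \ Γ) = restr (u - x) (Λ \ Γ) + restr x (Λ \ Γ) := by
        rw [← restr_add, sub_add_cancel]
      have e2 : l2norm (restr (u - x) (Λ \ Γ)) = l2norm (restr (x - u) (Λ \ Γ)) := by
        rw [restr_sub, l2_sub_comm, ← restr_sub]
      have e3 : l2norm (restr x (Λ \ Γ)) ≤ g := by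
        rw [hg]
        apply restr_mono
        intro i hi
        exact Finset.mem_compl.2 (Finset.mem_sdiff.1 hi).2
      calc l2norm (restr u (Λ \ Γ)) ≤ l2norm (restr (u - x) (Λ \ Γ)) + l2norm (restr x (Λ \ Γ)) := by
            rw [e1]; exact l2_triangle _ _
        _ ≤ l2norm (restr (x - u) (Λ \ Γ)) + g := by rw [e2]; linarith
    have hdisjQ : Disjoint Q (Λ \ Γ) := by
      rw [Finset.disjoint_left]
      intro i hi hiL
      exact (Finset.mem_sdiff.1 hi).2 (Finset.mem_sdiff.1 hiL).1
    have t4 : l2norm (restr (x - u) Q) + l2norm (restr (x - u) (Λ \ Γ)) ≤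
        Real.sqrt 2 * l2norm (restr (x - u) (Q ∪ (Λ \ Γ))) := two_restr_le hdisjQ
    have t5 : l2norm (restr (x - u) (Q ∪ (Λ \ Γ))) ≤ δ * l2norm d := by
      rw [hxu]
      apply offdiag hR hδ0
      apply le_trans (Finset.card_le_card _) hcard
      intro i hi
      rcases Finset.mem_union.1 hi with h | h
      · rcases Finset.mem_union.1 h with h' | h'
        · exact Finset.mem_union_right _ (Finset.mem_union_left _ (Finset.mem_inter.1 (Finset.mem_sdiff.1 h').1).1)
        · exact Finset.mem_union_left _ (Finset.mem_sdiff.1 h').1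
      · rcases Finset.mem_union.1 (hdsupp h) with h' | h'
        · exact Finset.mem_union_right _ (Finset.mem_union_left _ h')
        · exact Finset.mem_union_right _ (Finset.mem_union_right _ h')
    calc l2norm (restr x Q) ≤ l2norm (restr (x - u) Q) + l2norm (restr u Q) := t1
      _ ≤ l2norm (restr (x - u) Q) + (l2norm (restr (x - u) (Λ \ Γ)) + g) := by linarith
      _ ≤ Real.sqrt 2 * l2norm (restr (x - u) (Q ∪ (Λ \ Γ))) + g := by linarith
      _ ≤ Real.sqrt 2 * (δ * l2norm d) + g := by
          have := mul_le_mul_of_nonneg_left t5 (Real.sqrt_nonneg 2)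
          linarith
      _ = aa + g := by rw [haa]; ring
  -- combine
  have hone : (1:ℝ) ≤ Real.sqrt 2 := by
    rw [show (1:ℝ) = Real.sqrt 1 by simp]
    exact Real.sqrt_le_sqrt (by norm_num)
  have hfinal_sq : (l2norm (restr x Λᶜ))^2 ≤ (aa + Real.sqrt 2 * g)^2 := by
    have hq2 : (l2norm (restr x Q))^2 ≤ (aa + g)^2 :=
      pow_le_pow_left₀ (l2_nonneg _) hQle 2
    have hs2 : Real.sqrt 2 ^ 2 = 2 := Real.sq_sqrt (by norm_num)
    have key : aa * g ≤ Real.sqrt 2 * (aa * g) :=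
      le_mul_of_one_le_left (mul_nonneg haa0 hg0) hone
    nlinarith [hred, hPle, hq2, hs2, key]
  have := real_le_of_sq (l2_nonneg _) (by positivity) hfinal_sq
  calc l2norm (restr x Λᶜ) ≤ aa + Real.sqrt 2 * g := this
    _ = Real.sqrt 2 * δ * l2norm (x - xprev) + Real.sqrt 2 * l2norm (restr x Γᶜ) := by
        rw [haa, hg, hd]

end Aux


section Plumbing
open Aux
variable {M N : ℕ} (A : MCHTP M N)

lemma Ksel_le_Kbar (hA : A.Valid) : ∀ t, A.Ksel t ≤ A.Kbar := by
  intro t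
  induction t with
  | zero => rw [hA.2.1]; exact Nat.zero_le _
  | succ t ih =>
    obtain ⟨h1, h2, h3, h4, h5⟩ := hA.2.2.2 (t+1) (by omega)
    rw [h4]
    unfold MCHTP.Kti
    split
    · simpa using ih
    · exact (Finset.mem_Icc.1 h1.1).2

lemma Kti_le_Kbar (hA : A.Valid) {t : ℕ} (ht : 1 ≤ t) (i : Fin 2) :
    A.Kti t i ≤ A.Kbar := by
  obtain ⟨h1, h2, h3, h4, h5⟩ := hA.2.2.2 t ht
  unfold MCHTP.Kti
  split
  · exact Ksel_le_Kbar A hA _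
  · exact (Finset.mem_Icc.1 h1.1).2

lemma supp_xsel_le (hA : A.Valid) : ∀ t, (suppF (A.xsel t)).card ≤ A.Kbar := by
  intro t
  match t with
  | 0 =>
    rw [hA.1]
    have : suppF (0 : Fin N → ℝ) = ∅ := by
      ext i; simp [suppF]
    rw [this]
    simp
  | (t+1) =>
    obtain ⟨h1, h2, h3, h4, h5⟩ := hA.2.2.2 (t+1) (by omega)
    rw [h5]
    have hsub := (h2 (A.isel (t+1))).2.1
    have hcard := (h2 (A.isel (t+1))).1.1
    calc (suppF (A.xint (t+1) (A.isel (t+1)))).card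
        ≤ (A.Lam (t+1) (A.isel (t+1))).card := Finset.card_le_card hsub
      _ = A.Kti (t+1) (A.isel (t+1)) := hcard
      _ ≤ A.Kbar := Kti_le_Kbar A hA (by omega) _

lemma big_card (hA : A.Valid) {K : ℕ} {x : Fin N → ℝ} (hxK : sparsity x = K)
    {t : ℕ} (ht : 1 ≤ t) (i : Fin 2) :
    (A.Lam t i ∪ (suppF x ∪ suppF (A.xsel (t-1)))).card ≤ 2 * A.Kbar + K := by
  obtain ⟨h1, h2, h3, h4, h5⟩ := hA.2.2.2 t ht
  have hLam : (A.Lam t i).card = A.Kti t i := (h2 i).1.1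
  have hx : (suppF x).card = K := hxK
  have hprev := supp_xsel_le A hA (t-1)
  have hKti := Kti_le_Kbar A hA ht i
  calc (A.Lam t i ∪ (suppF x ∪ suppF (A.xsel (t-1)))).card
      ≤ (A.Lam t i).card + (suppF x ∪ suppF (A.xsel (t-1))).card := Finset.card_union_le _ _
    _ ≤ (A.Lam t i).card + ((suppF x).card + (suppF (A.xsel (t-1))).card) := by
        have := Finset.card_union_le (suppF x) (suppF (A.xsel (t-1)))
        omega
    _ ≤ 2 * A.Kbar + K := by omega

variable {K : ℕ} {x : Fin N → ℝ} {δ : ℝ}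

lemma stepA (hA : A.Valid) (hR : HasRIC A.Phi (2*A.Kbar+K) δ) (hδ0 : 0 ≤ δ)
    (hy : A.y = A.Phi.mulVec x) (hxK : sparsity x = K)
    {t : ℕ} (ht : 1 ≤ t) (i : Fin 2) (hk : K ≤ A.Kti t i) :
    l2norm (A.xint t i - x) ≤
      (Real.sqrt 2 * δ / Real.sqrt (1-δ^2)) * l2norm (A.xsel (t-1) - x) := by
  obtain ⟨h1, h2, h3, h4, h5⟩ := hA.2.2.2 t ht
  obtain ⟨htop, hLSE⟩ := h2 i
  rw [hy] at htop hLSE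
  have hcard := big_card A hA hxK ht i
  have hsx : (suppF x).card ≤ A.Kti t i := by
    have : (suppF x).card = K := hxK
    omega
  have hoff := offL_caseA hR hδ0 htop hsx hcard
  have hW0 : 0 ≤ Real.sqrt 2 * δ * l2norm (x - A.xsel (t-1)) := by
    have := l2_nonneg (x - A.xsel (t-1))
    positivity
  have hm := iter_master hR hδ0 hLSE hcard hW0 hoff
  rw [div_mul_eq_mul_div, l2_sub_comm (A.xsel (t-1)) x]
  calc l2norm (A.xint t i - x)
      ≤ Real.sqrt 2 * δ * l2norm (x - A.xsel (t-1)) / Real.sqrt (1 - δ^2) := hm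
    _ = Real.sqrt 2 * δ * l2norm (x - A.xsel (t-1)) / Real.sqrt (1 - δ^2) := rfl

lemma stepB (hA : A.Valid) (hR : HasRIC A.Phi (2*A.Kbar+K) δ) (hδ0 : 0 ≤ δ)
    (hy : A.y = A.Phi.mulVec x) (hxK : sparsity x = K)
    {t : ℕ} (ht : 1 ≤ t) (i : Fin 2) {Γ : Finset (Fin N)}
    (hΓ : IsTopSupport x (A.Kti t i) Γ) :
    l2norm (A.xint t i - x) ≤
      (Real.sqrt 2 * δ / Real.sqrt (1-δ^2)) * l2norm (A.xsel (t-1) - x) +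
      (Real.sqrt 2 / Real.sqrt (1-δ^2)) * l2norm (restr x Γᶜ) := by
  obtain ⟨h1, h2, h3, h4, h5⟩ := hA.2.2.2 t ht
  obtain ⟨htop, hLSE⟩ := h2 i
  rw [hy] at htop hLSE
  have hcard := big_card A hA hxK ht i
  have hoff := offL_caseB hR hδ0 htop hΓ hcard
  have hW0 : 0 ≤ Real.sqrt 2 * δ * l2norm (x - A.xsel (t-1)) +
      Real.sqrt 2 * l2norm (restr x Γᶜ) := by
    have := l2_nonneg (x - A.xsel (t-1))
    have := l2_nonneg (restr x Γᶜ)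
    positivity
  have hm := iter_master hR hδ0 hLSE hcard hW0 hoff
  have hc : 0 < Real.sqrt (1 - δ^2) := Real.sqrt_pos.2 (by nlinarith [hR.1])
  rw [l2_sub_comm (A.xsel (t-1)) x]
  calc l2norm (A.xint t i - x)
      ≤ (Real.sqrt 2 * δ * l2norm (x - A.xsel (t-1)) +
          Real.sqrt 2 * l2norm (restr x Γᶜ)) / Real.sqrt (1 - δ^2) := hm
    _ = (Real.sqrt 2 * δ / Real.sqrt (1-δ^2)) * l2norm (x - A.xsel (t-1)) +
        (Real.sqrt 2 / Real.sqrt (1-δ^2)) * l2norm (restr x Γᶜ) := by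
          field_simp
          try ring

lemma sparsity_diff (hA : A.Valid) (hxK : sparsity x = K)
    {t : ℕ} (ht : 1 ≤ t) (i : Fin 2) :
    sparsity (x - A.xint t i) ≤ 2 * A.Kbar + K := by
  obtain ⟨h1, h2, h3, h4, h5⟩ := hA.2.2.2 t ht
  have hsub : suppF (x - A.xint t i) ⊆ suppF x ∪ A.Lam t i :=
    (suppF_sub x _).trans (Finset.union_subset_union_right (h2 i).2.1)
  have hx : (suppF x).card = K := hxK
  have hLam : (A.Lam t i).card = A.Kti t i := (h2 i).1.1
  have hKti := Kti_le_Kbar A hA ht i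
  calc sparsity (x - A.xint t i) ≤ (suppF x ∪ A.Lam t i).card := sparsity_le_of_supp hsub
    _ ≤ (suppF x).card + (A.Lam t i).card := Finset.card_union_le _ _
    _ ≤ 2 * A.Kbar + K := by omega

lemma E_eq (hy : A.y = A.Phi.mulVec x) (t : ℕ) (i : Fin 2) :
    A.E t i = (l2norm (A.Phi.mulVec (x - A.xint t i)))^2 := by
  unfold MCHTP.E
  rw [hy, ← Matrix.mulVec_sub]

lemma E_upper (hA : A.Valid) (hR : HasRIC A.Phi (2*A.Kbar+K) δ)
    (hy : A.y = A.Phi.mulVec x) (hxK : sparsity x = K)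
    {t : ℕ} (ht : 1 ≤ t) (i : Fin 2) :
    A.E t i ≤ (1+δ) * (l2norm (A.xint t i - x))^2 := by
  rw [E_eq A hy t i]
  have := (hR.2 _ (sparsity_diff A hA hxK ht i)).2
  rwa [l2_sub_comm x (A.xint t i)] at this

lemma E_lower (hA : A.Valid) (hR : HasRIC A.Phi (2*A.Kbar+K) δ)
    (hy : A.y = A.Phi.mulVec x) (hxK : sparsity x = K)
    {xmin : ℝ} (hxmin_pos : 0 < xmin)
    (hbd : ∀ i, x i ≠ 0 → xmin ≤ |x i|)
    {t : ℕ} (ht : 1 ≤ t) (hk : A.Kti t 1 < K) :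
    (1-δ) * xmin^2 ≤ A.E t 1 := by
  obtain ⟨h1, h2, h3, h4, h5⟩ := hA.2.2.2 t ht
  set Λ := A.Lam t 1 with hΛ
  have hLamcard : Λ.card = A.Kti t 1 := (h2 1).1.1
  have hsupp : suppF (A.xint t 1) ⊆ Λ := (h2 1).2.1
  -- there is j in supp x missing from Λ
  have hxcard : (suppF x).card = K := hxK
  have hex : ∃ j, j ∈ suppF x ∧ j ∉ Λ := by
    by_contra h
    push_neg at h
    have : suppF x ⊆ Λ := fun j hj => h j hj
    have := Finset.card_le_card this
    omega
  obtain ⟨j, hjS, hjΛ⟩ := hex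
  have hxj : xmin ≤ |x j| := hbd j (mem_suppF.1 hjS)
  have hxj2 : xmin^2 ≤ (x j)^2 := by
    have := pow_le_pow_left₀ hxmin_pos.le hxj 2
    rwa [sq_abs] at this
  -- lower bound on the estimation error
  have hlow : xmin^2 ≤ (l2norm (x - A.xint t 1))^2 := by
    have hsplit := l2_split (x - A.xint t 1) Λ
    have hcompl : restr (x - A.xint t 1) Λᶜ = restr x Λᶜ := restr_compl_eq hsupp
    have hterm : (x j)^2 ≤ (l2norm (restr x Λᶜ))^2 := by
      rw [restr_sq]
      exact Finset.single_le_sum (f := fun i => (x i)^2) (fun i _ => sq_nonneg _)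
        (Finset.mem_compl.2 hjΛ)
    nlinarith [sq_nonneg (l2norm (restr (x - A.xint t 1) Λ)), hsplit, hcompl ▸ hterm]
  rw [E_eq A hy t 1]
  have hric := (hR.2 _ (sparsity_diff A hA hxK ht 1)).1
  have hδ1 : δ < 1 := hR.1
  nlinarith [hric, hlow]

end Plumbing

/-- `a_K(δ) = (1−δ)/√K − 3√2·δ`. -/
def aK (K : ℕ) (δ : ℝ) : ℝ := (1 - δ) / Real.sqrt K - 3 * Real.sqrt 2 * δ

/-- `b(δ) = 5√2·δ`. -/
def bC (δ : ℝ) : ℝ := 5 * Real.sqrt 2 * δ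

set_option maxHeartbeats 1000000 in
/-- All the numeric estimates needed, in a minimal context. -/
lemma num1 {K : ℕ} (hK2 : 2 ≤ K) {δ xmin xmax : ℝ}
    (hδ0 : 0 ≤ δ) (hδ1 : δ < 1)
    (hxmin_pos : 0 < xmin) (hxmax : xmin ≤ xmax)
    (hδbig : δ * (1 + (3 + 5*(xmax/xmin)) * Real.sqrt (2*(K:ℝ))) < 1) :
    17 * δ < 1 ∧
    ((1-δ)/(1+δ)^2)*(aK K δ * xmin - bC δ * xmax)^2 ≤ (1-δ)*xmin^2/2 ∧
    δ*(Real.sqrt (K:ℝ)*xmax) ≤ xmin/7 := by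
  have hxmax_pos : 0 < xmax := lt_of_lt_of_le hxmin_pos hxmax
  set s2 := Real.sqrt 2 with hs2def
  set sK := Real.sqrt (K:ℝ) with hsKdef
  set R := xmax / xmin with hRdef
  set val := aK K δ * xmin - bC δ * xmax with hvaldef
  have hs2sq : s2^2 = 2 := Real.sq_sqrt (by norm_num)
  have hs2pos : 0 < s2 := Real.sqrt_pos.2 (by norm_num)
  have hs2one : (1:ℝ) ≤ s2 := Aux.real_le_of_sq zero_le_one hs2pos.le (by nlinarith)
  have hKpos : (0:ℝ) < (K:ℝ) := by exact_mod_cast (by omega : 0 < K)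
  have hK2' : (2:ℝ) ≤ (K:ℝ) := by exact_mod_cast hK2
  have hsKsq : sK^2 = (K:ℝ) := Real.sq_sqrt hKpos.le
  have hsKpos : 0 < sK := Real.sqrt_pos.2 hKpos
  have hsK1 : (1:ℝ) ≤ sK := Aux.real_le_of_sq zero_le_one hsKpos.le (by nlinarith)
  have h2K : Real.sqrt (2*(K:ℝ)) = s2 * sK := by
    rw [hs2def, hsKdef]; exact Real.sqrt_mul (by norm_num) _
  have hs2K2 : (2:ℝ) ≤ s2 * sK := Aux.real_le_of_sq (by norm_num) (by positivity)
    (by nlinarith)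
  have hR1 : (1:ℝ) ≤ R := (one_le_div hxmin_pos).2 hxmax
  have hRx : R * xmin = xmax := div_mul_cancel₀ xmax (ne_of_gt hxmin_pos)
  rw [h2K] at hδbig
  set D := 1 + (3 + 5*R) * (s2*sK) with hDdef
  have hDpos : 0 < D := by
    have h0 : 0 ≤ (3 + 5*R) * (s2*sK) := mul_nonneg (by linarith) (by positivity)
    rw [hDdef]
    linarith
  have hD17 : (17:ℝ) ≤ D := by
    have hprod : 0 ≤ (5*R - 5) * (s2*sK - 2) :=
      mul_nonneg (by linarith) (by linarith)
    rw [hDdef]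
    nlinarith [hprod]
  have hδD : δ * D < 1 := hδbig
  have hδ17 : 17 * δ < 1 := by nlinarith [mul_le_mul_of_nonneg_left hD17 hδ0]
  refine ⟨hδ17, ?_, ?_⟩
  · -- threshold bound
    have hkey1 : δ * ((3 + 5*R) * (s2*sK)) < 1 - δ := by nlinarith
    have hval_eq : val = (1-δ)*xmin/sK - δ*s2*(3*xmin + 5*xmax) := by
      rw [hvaldef]
      unfold aK bC
      rw [← hs2def, ← hsKdef]
      field_simp
      ring
    have hkey2 : δ*s2*(3*xmin + 5*xmax) < (1-δ)*xmin/sK := by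
      have hpos : 0 < xmin / sK := by positivity
      have hmul := mul_lt_mul_of_pos_right hkey1 hpos
      have heqL : δ * ((3 + 5*R) * (s2*sK)) * (xmin/sK) = δ*s2*(3*xmin + 5*xmax) := by
        rw [hRdef]
        field_simp
      have heqR : (1 - δ) * (xmin/sK) = (1-δ)*xmin/sK := by ring
      rw [heqL, heqR] at hmul
      exact hmul
    have hval_pos : 0 < val := by rw [hval_eq]; linarith
    have hval_le : val ≤ xmin/sK := by
      rw [hval_eq]
      have h1 : (1-δ)*xmin/sK ≤ xmin/sK := by
        apply (div_le_div_iff_of_pos_right hsKpos).2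
        nlinarith
      nlinarith [mul_nonneg (mul_nonneg hδ0 hs2pos.le) (by linarith : (0:ℝ) ≤ 3*xmin + 5*xmax)]
    have hval2 : val^2 ≤ xmin^2/(K:ℝ) := by
      have h := pow_le_pow_left₀ hval_pos.le hval_le 2
      rwa [div_pow, hsKsq] at h
    have h1 : (1-δ)/(1+δ)^2 ≤ (1-δ) := by
      rw [div_le_iff₀ (by positivity)]
      have hh := mul_nonneg (by linarith : (0:ℝ) ≤ 1-δ) (by nlinarith : (0:ℝ) ≤ 2*δ+δ^2)
      nlinarith [hh]
    have h2 : xmin^2/(K:ℝ) ≤ xmin^2/2 := by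
      rw [div_le_div_iff₀ hKpos (by norm_num : (0:ℝ) < 2)]
      nlinarith [sq_nonneg xmin]
    have h3 : val^2 ≤ xmin^2/2 := hval2.trans h2
    have h4 : 0 ≤ (1-δ)/(1+δ)^2 := div_nonneg (by linarith) (by positivity)
    nlinarith [sq_nonneg val, hval2, h3, h1, h4]
  · -- δ·√K·xmax bound
    have h5' : δ*(5*R*(s2*sK)) < 1 := by
      nlinarith [mul_nonneg hδ0 (by nlinarith : (0:ℝ) ≤ 1 + 3*(s2*sK))]
    have hpos2 : 0 < xmin/(5*s2) := by positivity
    have hmul := mul_lt_mul_of_pos_right h5' hpos2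
    have heq2 : δ*(5*R*(s2*sK))*(xmin/(5*s2)) = δ*(sK*xmax) := by
      rw [hRdef]
      field_simp
    rw [heq2, one_mul] at hmul
    have hs75 : (7:ℝ)/5 ≤ s2 := Aux.real_le_of_sq (by norm_num) hs2pos.le (by nlinarith)
    have h7 : xmin/(5*s2) ≤ xmin/7 := by
      rw [div_le_div_iff₀ (by positivity) (by norm_num : (0:ℝ) < 7)]
      nlinarith
    linarith

lemma num2 {δ ρ γ : ℝ} (hδ0 : 0 ≤ δ) (hδ17 : 17 * δ < 1)
    (hρ : ρ = Real.sqrt 2 * δ / Real.sqrt (1 - δ^2))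
    (hγ : γ = Real.sqrt 2 / Real.sqrt (1 - δ^2)) :
    0 ≤ ρ ∧ 0 ≤ γ ∧ ρ ≤ 2*δ ∧ γ ≤ 2 ∧ ρ < 1 := by
  have hδ1 : δ < 1 := by linarith
  have hδsq : δ^2 ≤ δ := by nlinarith
  have h1mδ2 : 0 < 1 - δ^2 := by nlinarith
  set s2 := Real.sqrt 2 with hs2def
  set c := Real.sqrt (1 - δ^2) with hcdef
  have hs2sq : s2^2 = 2 := Real.sq_sqrt (by norm_num)
  have hs2pos : 0 < s2 := Real.sqrt_pos.2 (by norm_num)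
  have hc2 : c^2 = 1 - δ^2 := Real.sq_sqrt h1mδ2.le
  have hcpos : 0 < c := Real.sqrt_pos.2 h1mδ2
  have hchalf : (1:ℝ)/2 ≤ c^2 := by rw [hc2]; nlinarith
  have h2cs : s2 ≤ 2*c := Aux.real_le_of_sq hs2pos.le (by positivity) (by nlinarith)
  have hρ0 : 0 ≤ ρ := by rw [hρ]; positivity
  have hγ0 : 0 ≤ γ := by rw [hγ]; positivity
  have hρle : ρ ≤ 2*δ := by
    rw [hρ, div_le_iff₀ hcpos]
    nlinarith
  have hγle : γ ≤ 2 := by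
    rw [hγ, div_le_iff₀ hcpos]
    linarith
  exact ⟨hρ0, hγ0, hρle, hγle, by linarith⟩

lemma num3 {δ xmin ρ γ sM : ℝ} (hδ0 : 0 ≤ δ) (hδ17 : 17*δ < 1) (hxmin_pos : 0 < xmin)
    (hsM : 0 ≤ sM) (hδKx : δ*sM ≤ xmin/7)
    (hρ0 : 0 ≤ ρ) (hρle : ρ ≤ 2*δ) (hρ1 : ρ < 1) (hγ0 : 0 ≤ γ) (hγle : γ ≤ 2) :
    (ρ * (sM * (1 + γ/(1-ρ))) + γ*sM ≤ sM * (1 + γ/(1-ρ))) ∧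
    sM ≤ sM * (1 + γ/(1-ρ)) ∧
    (1+δ)*(ρ*(ρ*(sM * (1 + γ/(1-ρ)))))^2 ≤ (1-δ)*xmin^2/2 := by
  have h1ρpos : (0:ℝ) < 1 - ρ := by linarith
  set Bpre := sM*(1 + γ/(1-ρ)) with hBpredef
  have hfac0 : 0 ≤ γ/(1-ρ) := by positivity
  have hfac1 : (1:ℝ) ≤ 1 + γ/(1-ρ) := by linarith
  have hfacle : 1 + γ/(1-ρ) ≤ 4 := by
    have hδb : ρ ≤ 2/17 := by linarith
    have : γ/(1-ρ) ≤ 3 := by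
      rw [div_le_iff₀ h1ρpos]
      nlinarith
    linarith
  have hBpre0 : 0 ≤ Bpre := by rw [hBpredef]; positivity
  have hBprele : Bpre ≤ 4*sM := by
    rw [hBpredef]
    nlinarith
  have hB00 : 0 ≤ ρ * Bpre := mul_nonneg hρ0 hBpre0
  refine ⟨?_, ?_, ?_⟩
  · have hfact : (1-ρ)*Bpre = sM*((1-ρ) + γ) := by
      rw [hBpredef]
      field_simp
      try ring
    nlinarith [mul_nonneg hsM h1ρpos.le]
  · calc sM = sM*1 := (mul_one sM).symm
      _ ≤ sM*(1+γ/(1-ρ)) := mul_le_mul_of_nonneg_left hfac1 hsM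
      _ = Bpre := hBpredef.symm
  · have hρB0 : ρ*(ρ*Bpre) ≤ (16:ℝ)/119 * xmin := by
      have s1 : ρ*Bpre ≤ 2*δ*(4*sM) := mul_le_mul hρle hBprele hBpre0 (by linarith)
      have s2'' : ρ*(ρ*Bpre) ≤ 2*δ*(2*δ*(4*sM)) := by
        calc ρ*(ρ*Bpre) ≤ 2*δ*(ρ*Bpre) := mul_le_mul_of_nonneg_right hρle hB00
          _ ≤ 2*δ*(2*δ*(4*sM)) := mul_le_mul_of_nonneg_left s1 (by linarith)
      have s3 : 2*δ*(2*δ*(4*sM)) = 16*δ*(δ*sM) := by ring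
      have s4 : 16*δ*(δ*sM) ≤ 16*(1/17)*(xmin/7) := by
        have h16 : 16*δ ≤ 16*(1/17) := by linarith
        have hnn : 0 ≤ δ*sM := mul_nonneg hδ0 hsM
        calc 16*δ*(δ*sM) ≤ 16*(1/17)*(δ*sM) := mul_le_mul_of_nonneg_right h16 hnn
          _ ≤ 16*(1/17)*(xmin/7) := mul_le_mul_of_nonneg_left hδKx (by norm_num)
      calc ρ*(ρ*Bpre) ≤ 2*δ*(2*δ*(4*sM)) := s2''
        _ = 16*δ*(δ*sM) := s3
        _ ≤ 16*(1/17)*(xmin/7) := s4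
        _ ≤ (16:ℝ)/119 * xmin := by nlinarith
    have h1 : (ρ*(ρ*Bpre))^2 ≤ ((16:ℝ)/119*xmin)^2 :=
      pow_le_pow_left₀ (mul_nonneg hρ0 hB00) hρB0 2
    nlinarith [sq_nonneg (ρ*(ρ*Bpre)), sq_nonneg xmin, h1]

lemma numeric_all {K : ℕ} (hK2 : 2 ≤ K) {δ xmin xmax ρ γ : ℝ}
    (hδ0 : 0 ≤ δ) (hδ1 : δ < 1)
    (hxmin_pos : 0 < xmin) (hxmax : xmin ≤ xmax)
    (hδbig : δ * (1 + (3 + 5*(xmax/xmin)) * Real.sqrt (2*(K:ℝ))) < 1)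
    (hρ : ρ = Real.sqrt 2 * δ / Real.sqrt (1 - δ^2))
    (hγ : γ = Real.sqrt 2 / Real.sqrt (1 - δ^2)) :
    0 ≤ ρ ∧ 0 ≤ γ ∧ ρ < 1 ∧
    (ρ * (Real.sqrt (K:ℝ) * xmax * (1 + γ/(1-ρ))) + γ*(Real.sqrt (K:ℝ)*xmax) ≤
        Real.sqrt (K:ℝ) * xmax * (1 + γ/(1-ρ))) ∧
    Real.sqrt (K:ℝ) * xmax ≤ Real.sqrt (K:ℝ) * xmax * (1 + γ/(1-ρ)) ∧
    (1+δ)*(ρ*(ρ*(Real.sqrt (K:ℝ) * xmax * (1 + γ/(1-ρ)))))^2 +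
        ((1-δ)/(1+δ)^2)*(aK K δ * xmin - bC δ * xmax)^2 ≤ (1-δ)*xmin^2 := by
  obtain ⟨hδ17, hCle, hδKx⟩ := num1 hK2 hδ0 hδ1 hxmin_pos hxmax hδbig
  obtain ⟨hρ0, hγ0, hρle, hγle, hρ1⟩ := num2 hδ0 hδ17 hρ hγ
  have hsM : 0 ≤ Real.sqrt (K:ℝ) * xmax :=
    mul_nonneg (Real.sqrt_nonneg _) (by linarith)
  obtain ⟨c1, c2, c3⟩ := num3 hδ0 hδ17 hxmin_pos hsM hδKx hρ0 hρle hρ1 hγ0 hγle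
  have hmulassoc : Real.sqrt (K:ℝ) * xmax * (1 + γ/(1-ρ)) =
      (Real.sqrt (K:ℝ) * xmax) * (1 + γ/(1-ρ)) := by ring
  refine ⟨hρ0, hγ0, hρ1, ?_, ?_, ?_⟩
  · rw [hmulassoc]; exact c1
  · rw [hmulassoc]; exact c2
  · rw [hmulassoc]; linarith [c3, hCle]

set_option maxHeartbeats 1000000 in
/-- convergence of MCHTP. Before `T₁` the iterates satisfy
`‖x^t − x‖ ≤ ρ‖x^{t−1} − x‖ + γ‖x_{Γ̄_t}‖` for any top-`K_t` support `Γ_t` of `x`;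
from `T₁` on, `‖x^t − x‖ ≤ ρ‖x^{t−1} − x‖`; consequently, if `ρ < 1` then
`x^t → x`. -/
theorem mchtp_convergence {M N : ℕ} (A : MCHTP M N) (hA : A.Valid)
    (K : ℕ) (hK2 : 2 ≤ K) (hKKbar : K ≤ A.Kbar)
    (x : Fin N → ℝ) (hy : A.y = A.Phi.mulVec x) (hxK : sparsity x = K)
    (xmin xmax : ℝ) (hxmin_pos : 0 < xmin)
    (hbd : ∀ i, x i ≠ 0 → xmin ≤ |x i| ∧ |x i| ≤ xmax)
    (hmin_att : ∃ i, x i ≠ 0 ∧ |x i| = xmin)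
    (hmax_att : ∃ i, x i ≠ 0 ∧ |x i| = xmax)
    (δ : ℝ) (hδ0 : 0 ≤ δ) (hRIC : HasRIC A.Phi (2 * A.Kbar + K) δ)
    (hδ : δ < 1 / (1 + (3 + 5 * (xmax / xmin)) * Real.sqrt (2 * K)))
    (hε : A.eps < ((1 - δ) / (1 + δ) ^ 2) * (aK K δ * xmin - bC δ * xmax) ^ 2)
    (ρ γ : ℝ) (hρ : ρ = Real.sqrt 2 * δ / Real.sqrt (1 - δ ^ 2))
    (hγ : γ = Real.sqrt 2 / Real.sqrt (1 - δ ^ 2))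
    (T₁ : ℕ) (hT₁1 : 1 ≤ T₁) (hT₁2 : K ≤ A.Ksel T₁)
    (hT₁min : ∀ s, 1 ≤ s → s < T₁ → A.Ksel s < K) :
    (∀ t, 1 ≤ t → t < T₁ → ∀ Γ : Finset (Fin N), IsTopSupport x (A.Ksel t) Γ →
        l2norm (A.xsel t - x) ≤
          ρ * l2norm (A.xsel (t - 1) - x) + γ * l2norm (restr x Γᶜ)) ∧
      (∀ t, T₁ ≤ t → l2norm (A.xsel t - x) ≤ ρ * l2norm (A.xsel (t - 1) - x)) ∧
      (ρ < 1 →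
        Filter.Tendsto (fun t => l2norm (A.xsel t - x)) Filter.atTop (nhds 0)) := by
  have hδ1 : δ < 1 := hRIC.1
  have hxmax : xmin ≤ xmax := by
    obtain ⟨i, hne, heq⟩ := hmax_att
    have h := (hbd i hne).1
    rw [heq] at h
    exact h
  have hxmax_pos : 0 < xmax := lt_of_lt_of_le hxmin_pos hxmax
  have hδbig : δ * (1 + (3 + 5*(xmax/xmin)) * Real.sqrt (2*(K:ℝ))) < 1 := by
    have hq : (0:ℝ) ≤ xmax/xmin := le_of_lt (div_pos hxmax_pos hxmin_pos)
    have hDpos : (0:ℝ) < 1 + (3 + 5*(xmax/xmin)) * Real.sqrt (2*(K:ℝ)) := by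
      have h0 : 0 ≤ (3 + 5*(xmax/xmin)) * Real.sqrt (2*(K:ℝ)) :=
        mul_nonneg (by linarith only [hq]) (Real.sqrt_nonneg _)
      linarith only [h0]
    exact (lt_div_iff₀ hDpos).1 hδ
  obtain ⟨hρ0, hγ0, hρ1, hstepineq, hBge, hNUMpre⟩ :=
    numeric_all hK2 hδ0 hδ1 hxmin_pos hxmax hδbig hρ hγ
  set Bpre := Real.sqrt (K:ℝ) * xmax * (1 + γ/(1-ρ)) with hBpredef
  set B0 := ρ * Bpre with hB0def
  have hBpre0 : 0 ≤ Bpre := le_trans (by positivity) hBge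
  have hB00 : 0 ≤ B0 := mul_nonneg hρ0 hBpre0
  have hρB0le : ρ * B0 ≤ B0 := mul_le_of_le_one_left hB00 hρ1.le
  have hNUM : (1+δ)*(ρ*B0)^2 + ((1-δ)/(1+δ)^2)*(aK K δ * xmin - bC δ * xmax)^2 ≤
      (1-δ)*xmin^2 := hNUMpre
  -- bounds on the norm of x
  have hKN : K ≤ N := by
    rw [← hxK]
    calc sparsity x = (suppF x).card := rfl
      _ ≤ Finset.univ.card := Finset.card_le_univ _
      _ = N := by rw [Finset.card_univ, Fintype.card_fin]
  have hxnorm : l2norm x ≤ Real.sqrt (K:ℝ) * xmax := by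
    have hKpos : (0:ℝ) < (K:ℝ) := by exact_mod_cast (by omega : 0 < K)
    have hsum : (l2norm x)^2 ≤ (K:ℝ) * xmax^2 := by
      rw [Aux.l2_sq]
      have he : ∑ i, (x i)^2 = ∑ i ∈ suppF x, (x i)^2 := by
        apply (Finset.sum_subset (Finset.subset_univ _) ?_).symm
        intro i _ hi
        have h0 : x i = 0 := by
          by_contra hne
          exact hi (Aux.mem_suppF.2 hne)
        simp [h0]
      rw [he]
      have hcard : (suppF x).card = K := hxK
      calc ∑ i ∈ suppF x, (x i)^2 ≤ (suppF x).card • xmax^2 := by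
            apply Finset.sum_le_card_nsmul
            intro i hi
            have h := (hbd i (Aux.mem_suppF.1 hi)).2
            calc (x i)^2 = |x i|^2 := (sq_abs _).symm
              _ ≤ xmax^2 := pow_le_pow_left₀ (abs_nonneg _) h 2
        _ = (K:ℝ) * xmax^2 := by rw [hcard, nsmul_eq_mul]
    apply Aux.real_le_of_sq (Aux.l2_nonneg _) (by positivity)
    rw [mul_pow, Real.sq_sqrt hKpos.le]
    exact hsum
  have hrx : ∀ S' : Finset (Fin N), l2norm (restr x S') ≤ Real.sqrt (K:ℝ) * xmax := by
    intro S'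
    have h1 : restr x Finset.univ = x := by
      funext i; simp [restr]
    calc l2norm (restr x S') ≤ l2norm (restr x Finset.univ) :=
          Aux.restr_mono (Finset.subset_univ _)
      _ = l2norm x := by rw [h1]
      _ ≤ Real.sqrt (K:ℝ) * xmax := hxnorm
  -- pre-phase bound
  have prePhase : ∀ s, s < T₁ → l2norm (A.xsel s - x) ≤ Bpre := by
    intro s
    induction s with
    | zero =>
      intro _
      rw [hA.1]
      calc l2norm ((0:Fin N → ℝ) - x) = l2norm (x - 0) := Aux.l2_sub_comm _ _
        _ = l2norm x := by rw [sub_zero]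
        _ ≤ Real.sqrt (K:ℝ) * xmax := hxnorm
        _ ≤ Bpre := hBge
    | succ s ih =>
      intro hs
      have hsK : A.Ksel (s+1) < K := hT₁min (s+1) (by omega) hs
      have hKselN : A.Ksel (s+1) ≤ N := by omega
      obtain ⟨Γ, hΓ⟩ := Aux.exists_top x (A.Ksel (s+1)) hKselN
      obtain ⟨h1, h2, h3, h4, h5⟩ := hA.2.2.2 (s+1) (by omega)
      have hΓ' : IsTopSupport x (A.Kti (s+1) (A.isel (s+1))) Γ := by rw [← h4]; exact hΓ
      have hstep := stepB A hA hRIC hδ0 hy hxK (by omega) (A.isel (s+1)) hΓ'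
      rw [← h5, ← hρ, ← hγ] at hstep
      simp only [Nat.add_sub_cancel] at hstep
      have hprev : l2norm (A.xsel s - x) ≤ Bpre := ih (by omega)
      have hΓn : l2norm (restr x Γᶜ) ≤ Real.sqrt (K:ℝ)*xmax := hrx _
      calc l2norm (A.xsel (s+1) - x)
          ≤ ρ * l2norm (A.xsel s - x) + γ * l2norm (restr x Γᶜ) := hstep
        _ ≤ ρ*Bpre + γ*(Real.sqrt (K:ℝ)*xmax) :=
            add_le_add (mul_le_mul_of_nonneg_left hprev hρ0)
              (mul_le_mul_of_nonneg_left hΓn hγ0)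
        _ ≤ Bpre := hstepineq
  -- main phase
  have mainPhase : ∀ j, K ≤ A.Ksel (T₁+j) ∧
      l2norm (A.xsel (T₁+j) - x) ≤ ρ * l2norm (A.xsel (T₁+j-1) - x) ∧
      l2norm (A.xsel (T₁+j) - x) ≤ B0 := by
    intro j
    induction j with
    | zero =>
      simp only [Nat.add_zero]
      obtain ⟨h1, h2, h3, h4, h5⟩ := hA.2.2.2 T₁ hT₁1
      have hKti : K ≤ A.Kti T₁ (A.isel T₁) := by rw [← h4]; exact hT₁2
      have hstep := stepA A hA hRIC hδ0 hy hxK hT₁1 (A.isel T₁) hKti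
      rw [← h5, ← hρ] at hstep
      refine ⟨hT₁2, hstep, ?_⟩
      have hpre : l2norm (A.xsel (T₁-1) - x) ≤ Bpre := prePhase (T₁-1) (by omega)
      calc l2norm (A.xsel T₁ - x) ≤ ρ * l2norm (A.xsel (T₁-1) - x) := hstep
        _ ≤ ρ * Bpre := mul_le_mul_of_nonneg_left hpre hρ0
        _ = B0 := hB0def.symm
    | succ j ih =>
      obtain ⟨hKj, _, hBj⟩ := ih
      have ht1 : T₁ + (j+1) - 1 = T₁ + j := by omega
      obtain ⟨h1, h2, h3, h4, h5⟩ := hA.2.2.2 (T₁+(j+1)) (by omega)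
      by_cases hcase : K ≤ A.Ksam (T₁+(j+1))
      · have hKti : K ≤ A.Kti (T₁+(j+1)) (A.isel (T₁+(j+1))) := by
          unfold MCHTP.Kti
          split
          · rw [ht1]; exact hKj
          · exact hcase
        have hstep := stepA A hA hRIC hδ0 hy hxK (by omega) (A.isel (T₁+(j+1))) hKti
        rw [← h5, ← hρ] at hstep
        refine ⟨by rw [h4]; exact hKti, hstep, ?_⟩
        calc l2norm (A.xsel (T₁+(j+1)) - x)
            ≤ ρ * l2norm (A.xsel (T₁+(j+1)-1) - x) := hstep
          _ ≤ ρ * B0 := by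
              rw [ht1]
              exact mul_le_mul_of_nonneg_left hBj hρ0
          _ ≤ B0 := hρB0le
      · push_neg at hcase
        have hKt1 : A.Kti (T₁+(j+1)) 1 < K := by
          show (if (1:Fin 2) = 0 then A.Ksel (T₁+(j+1)-1) else A.Ksam (T₁+(j+1))) < K
          rw [if_neg (by decide)]
          exact hcase
        have hKt0 : K ≤ A.Kti (T₁+(j+1)) 0 := by
          show K ≤ (if (0:Fin 2) = 0 then A.Ksel (T₁+(j+1)-1) else A.Ksam (T₁+(j+1)))
          rw [if_pos rfl, ht1]
          exact hKj
        have hx0 := stepA A hA hRIC hδ0 hy hxK (by omega) 0 hKt0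
        rw [← hρ, ht1] at hx0
        have hx0' : l2norm (A.xint (T₁+(j+1)) 0 - x) ≤ ρ * B0 :=
          hx0.trans (mul_le_mul_of_nonneg_left hBj hρ0)
        have hE0 : A.E (T₁+(j+1)) 0 ≤ (1+δ)*(ρ*B0)^2 := by
          have h := E_upper A hA hRIC hy hxK (t := T₁+(j+1)) (by omega) 0
          have h2' : (l2norm (A.xint (T₁+(j+1)) 0 - x))^2 ≤ (ρ*B0)^2 :=
            pow_le_pow_left₀ (Aux.l2_nonneg _) hx0' 2
          exact h.trans (mul_le_mul_of_nonneg_left h2' (by linarith only [hδ0]))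
        have hE1 : (1-δ)*xmin^2 ≤ A.E (T₁+(j+1)) 1 :=
          E_lower A hA hRIC hy hxK hxmin_pos (fun i hi => (hbd i hi).1) (by omega) hKt1
        have hgap : A.eps < A.E (T₁+(j+1)) 1 - A.E (T₁+(j+1)) 0 := by
          linarith only [hNUM, hE0, hE1, hε]
        have hdE : A.eps < A.dE (T₁+(j+1)) := by
          show A.eps < |A.E (T₁+(j+1)) 1 - A.E (T₁+(j+1)) 0|
          exact lt_of_lt_of_le hgap (le_abs_self _)
        have hsel := h3.1 hdE 0
        have hisel : A.isel (T₁+(j+1)) = 0 := by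
          rcases (by decide : ∀ i : Fin 2, i = 0 ∨ i = 1) (A.isel (T₁+(j+1))) with h | h
          · exact h
          · exfalso
            rw [h] at hsel
            have heps := hA.2.2.1
            linarith only [hsel, hgap, heps]
        refine ⟨?_, ?_, ?_⟩
        · rw [h4, hisel]
          exact hKt0
        · rw [h5, hisel, ht1]
          exact hx0
        · rw [h5, hisel]
          exact hx0'.trans hρB0le
  -- conclusions
  refine ⟨?_, ?_, ?_⟩
  · intro t ht1' ht2' Γ hΓ
    obtain ⟨h1, h2, h3, h4, h5⟩ := hA.2.2.2 t ht1'
    have hΓ' : IsTopSupport x (A.Kti t (A.isel t)) Γ := by rw [← h4]; exact hΓ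
    have hstep := stepB A hA hRIC hδ0 hy hxK ht1' (A.isel t) hΓ'
    rw [← h5, ← hρ, ← hγ] at hstep
    exact hstep
  · intro t ht
    have hq := mainPhase (t - T₁)
    have heq : T₁ + (t - T₁) = t := by omega
    rw [heq] at hq
    exact hq.2.1
  · intro _
    have haux : ∀ j, l2norm (A.xsel (T₁+j) - x) ≤ ρ^j * l2norm (A.xsel T₁ - x) := by
      intro j
      induction j with
      | zero => simp
      | succ j ih =>
        have hq := (mainPhase (j+1)).2.1
        have heq : T₁ + (j+1) - 1 = T₁ + j := by omega
        rw [heq] at hq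
        calc l2norm (A.xsel (T₁+(j+1)) - x) ≤ ρ * l2norm (A.xsel (T₁+j) - x) := hq
          _ ≤ ρ * (ρ^j * l2norm (A.xsel T₁ - x)) := mul_le_mul_of_nonneg_left ih hρ0
          _ = ρ^(j+1) * l2norm (A.xsel T₁ - x) := by ring
    have hgeo : Filter.Tendsto (fun j : ℕ => ρ^j * l2norm (A.xsel T₁ - x))
        Filter.atTop (nhds 0) := by
      have h := (tendsto_pow_atTop_nhds_zero_of_lt_one hρ0 hρ1).mul_const
        (l2norm (A.xsel T₁ - x))
      simpa using h
    have hcomp : Filter.Tendsto (fun t : ℕ => t - T₁) Filter.atTop Filter.atTop :=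
      Filter.tendsto_atTop_atTop.2 (fun b => ⟨b + T₁, fun a ha => by omega⟩)
    have hupper : Filter.Tendsto (fun t : ℕ => ρ^(t - T₁) * l2norm (A.xsel T₁ - x))
        Filter.atTop (nhds 0) := hgeo.comp hcomp
    apply tendsto_of_tendsto_of_tendsto_of_le_of_le' tendsto_const_nhds hupper
    · exact Filter.Eventually.of_forall (fun t => Aux.l2_nonneg _)
    · rw [Filter.eventually_atTop]
      refine ⟨T₁, fun t ht => ?_⟩
      have h := haux (t - T₁)
      have heq : T₁ + (t - T₁) = t := by omega
      rw [heq] at h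
      exact h
end
end

section
/- Let Φ ∈ ℝ^{M×N} have restricted isometry constants δ_{K'+K} < 1 of order K'+K and δ_{K'+K_prev+K} of order K'+K_prev+K. Let x ∈ ℝ^N be K-sparse, y = Φx, and let w ∈ ℝ^N be K_prev-sparse. Let Λ' be a top-K' support of the vector w + Φᵀ(y − Φw), let x' be a least-squares estimate of y on Λ', and let Γ be a top-K' support of x. Then ‖x' − x‖ ≤ (√2·δ_{K'+K_prev+K}/√(1−δ_{K'+K}²))·‖w − x‖ + (√2/√(1−δ_{K'+K}²))·‖x_{Γ̄}‖. -/
open Finset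

noncomputable section

namespace HTPaux
open Matrix

variable {n m : ℕ}

lemma l2norm_nonneg (v : Fin n → ℝ) : 0 ≤ l2norm v := Real.sqrt_nonneg _

lemma sq_l2norm (v : Fin n → ℝ) : l2norm v ^ 2 = ∑ i, v i ^ 2 :=
  Real.sq_sqrt (Finset.sum_nonneg fun i _ => sq_nonneg _)

lemma l2norm_eq_zero_iff {v : Fin n → ℝ} : l2norm v = 0 ↔ v = 0 := by
  constructor
  · intro h
    have h2 : ∑ i, v i ^ 2 = 0 := by
      have := sq_l2norm v; rw [h] at this; simpa using this.symm
    funext i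
    have := (Finset.sum_eq_zero_iff_of_nonneg (fun i _ => sq_nonneg (v i))).1 h2 i (mem_univ i)
    exact pow_eq_zero_iff (n := 2) (by norm_num) |>.1 this
  · rintro rfl; simp [l2norm]

lemma sum_sq_pos_of_ne_zero {v : Fin n → ℝ} (hv : v ≠ 0) : 0 < ∑ i, v i ^ 2 := by
  rcases lt_or_eq_of_le (Finset.sum_nonneg fun i _ => sq_nonneg (v i)) with h | h
  · exact h
  · exfalso; apply hv; funext i
    have := (Finset.sum_eq_zero_iff_of_nonneg (fun i _ => sq_nonneg (v i))).1 h.symm i (mem_univ i)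
    exact pow_eq_zero_iff (n := 2) (by norm_num) |>.1 this

lemma le_of_sq_le_sq {a b : ℝ} (hb : 0 ≤ b) (h : a ^ 2 ≤ b ^ 2) (ha : 0 ≤ a) : a ≤ b := by
  nlinarith

lemma l2norm_restr (v : Fin n → ℝ) (S : Finset (Fin n)) :
    l2norm (restr v S) = Real.sqrt (∑ i ∈ S, v i ^ 2) := by
  unfold l2norm restr
  congr 1
  rw [show (∑ i, (if i ∈ S then v i else 0) ^ 2) = ∑ i, (if i ∈ S then v i ^ 2 else 0) from
    Finset.sum_congr rfl fun i _ => by split <;> simp]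
  rw [Finset.sum_ite_mem, Finset.univ_inter]

lemma restr_sq (v : Fin n → ℝ) (S : Finset (Fin n)) :
    l2norm (restr v S) ^ 2 = ∑ i ∈ S, v i ^ 2 := by
  rw [l2norm_restr]
  exact Real.sq_sqrt (Finset.sum_nonneg fun i _ => sq_nonneg _)

lemma restr_mono (v : Fin n → ℝ) {S T : Finset (Fin n)} (h : S ⊆ T) :
    l2norm (restr v S) ≤ l2norm (restr v T) := by
  rw [l2norm_restr, l2norm_restr]
  exact Real.sqrt_le_sqrt (Finset.sum_le_sum_of_subset_of_nonneg h fun i _ _ => sq_nonneg _)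

lemma sum_expand (p q : Fin n → ℝ) :
    ∑ i, (p i + q i) ^ 2 = (∑ i, p i ^ 2) + 2 * (∑ i, p i * q i) + ∑ i, q i ^ 2 := by
  rw [Finset.mul_sum, ← Finset.sum_add_distrib, ← Finset.sum_add_distrib]
  exact Finset.sum_congr rfl fun i _ => by ring

lemma sum_expand_sub (p q : Fin n → ℝ) :
    ∑ i, (p i - q i) ^ 2 = (∑ i, p i ^ 2) - 2 * (∑ i, p i * q i) + ∑ i, q i ^ 2 := by
  rw [Finset.mul_sum]
  rw [show ((∑ i, p i ^ 2) - (∑ i, 2 * (p i * q i)) + ∑ i, q i ^ 2)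
      = ∑ i, (p i ^ 2 - 2 * (p i * q i) + q i ^ 2) by
    rw [Finset.sum_add_distrib, Finset.sum_sub_distrib]]
  exact Finset.sum_congr rfl fun i _ => by ring

lemma cauchy (u v : Fin n → ℝ) : u ⬝ᵥ v ≤ l2norm u * l2norm v := by
  simpa [l2norm, dotProduct] using Real.sum_mul_le_sqrt_mul_sqrt Finset.univ u v

lemma l2norm_add_le (u v : Fin n → ℝ) : l2norm (u + v) ≤ l2norm u + l2norm v := by
  have hc : u ⬝ᵥ v ≤ l2norm u * l2norm v := cauchy u v
  have e1 : l2norm (u + v) ^ 2 = (∑ i, u i ^ 2) + 2 * (∑ i, u i * v i) + ∑ i, v i ^ 2 := by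
    rw [sq_l2norm]; simpa using sum_expand u v
  have hd : (∑ i, u i * v i) = u ⬝ᵥ v := rfl
  have := sq_l2norm u; have := sq_l2norm v
  apply le_of_sq_le_sq (add_nonneg (l2norm_nonneg u) (l2norm_nonneg v)) _ (l2norm_nonneg _)
  rw [e1, hd]
  nlinarith [l2norm_nonneg u, l2norm_nonneg v]

lemma l2norm_neg (v : Fin n → ℝ) : l2norm (-v) = l2norm v := by
  unfold l2norm; congr 1; exact Finset.sum_congr rfl fun i _ => by simp

lemma l2norm_sub_comm (u v : Fin n → ℝ) : l2norm (u - v) = l2norm (v - u) := by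
  rw [show u - v = -(v - u) by ring, l2norm_neg]

lemma dot_restr_self (v : Fin n → ℝ) (S : Finset (Fin n)) :
    restr v S ⬝ᵥ v = ∑ i ∈ S, v i ^ 2 := by
  unfold restr dotProduct
  rw [show (∑ i, (fun i => if i ∈ S then v i else 0) i * v i)
      = ∑ i, (if i ∈ S then v i ^ 2 else 0) from
    Finset.sum_congr rfl fun i _ => by by_cases h : i ∈ S <;> simp [h, sq]]
  rw [Finset.sum_ite_mem, Finset.univ_inter]

lemma suppF_sub (p q : Fin n → ℝ) : suppF (p - q) ⊆ suppF p ∪ suppF q := by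
  intro i hi
  simp only [suppF, mem_filter, mem_univ, true_and, Pi.sub_apply] at hi
  simp only [mem_union, suppF, mem_filter, mem_univ, true_and]
  by_contra h; push_neg at h
  exact hi (by rw [h.1, h.2, sub_zero])

lemma suppF_restr (v : Fin n → ℝ) (S : Finset (Fin n)) : suppF (restr v S) ⊆ S := by
  intro i hi
  simp only [suppF, restr, mem_filter, mem_univ, true_and] at hi
  by_contra h; simp [h] at hi

lemma suppF_restr_self (v : Fin n → ℝ) (S : Finset (Fin n)) : suppF (restr v S) ⊆ suppF v := by
  intro i hi
  simp only [suppF, restr, mem_filter, mem_univ, true_and] at hi ⊢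
  intro h; simp [h] at hi


variable {M N : ℕ}

lemma sparsity_eq (v : Fin N → ℝ) : sparsity v = (suppF v).card := rfl

lemma suppF_smul (c : ℝ) (v : Fin N → ℝ) : suppF (c • v) ⊆ suppF v := by
  intro i hi
  simp only [suppF, mem_filter, mem_univ, true_and, Pi.smul_apply, smul_eq_mul] at hi ⊢
  intro h; simp [h] at hi

lemma suppF_add (p q : Fin N → ℝ) : suppF (p + q) ⊆ suppF p ∪ suppF q := by
  intro i hi
  simp only [suppF, mem_filter, mem_univ, true_and, Pi.add_apply] at hi
  simp only [mem_union, suppF, mem_filter, mem_univ, true_and]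
  by_contra h; push_neg at h
  exact hi (by rw [h.1, h.2, add_zero])

/-- Base polarization inequality. -/
lemma ric_dot_base {Φ : Matrix (Fin M) (Fin N) ℝ} {s : ℕ} {δ : ℝ} (h : HasRIC Φ s δ)
    {a b : Fin N → ℝ} (hcard : (suppF a ∪ suppF b).card ≤ s) :
    |(Φ.mulVec a) ⬝ᵥ (Φ.mulVec b) - a ⬝ᵥ b| ≤ δ / 2 * (l2norm a ^ 2 + l2norm b ^ 2) := by
  have hab : sparsity (a + b) ≤ s :=
    le_trans (Finset.card_le_card (suppF_add a b)) hcard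
  have hab' : sparsity (a - b) ≤ s :=
    le_trans (Finset.card_le_card (suppF_sub a b)) hcard
  obtain ⟨h1p, h2p⟩ := h.2 _ hab
  obtain ⟨h1m, h2m⟩ := h.2 _ hab'
  have ep : l2norm (a + b) ^ 2 = (∑ i, a i ^ 2) + 2 * (a ⬝ᵥ b) + ∑ i, b i ^ 2 := by
    rw [sq_l2norm]; simpa [dotProduct] using sum_expand a b
  have em : l2norm (a - b) ^ 2 = (∑ i, a i ^ 2) - 2 * (a ⬝ᵥ b) + ∑ i, b i ^ 2 := by
    rw [sq_l2norm]; simpa [dotProduct] using sum_expand_sub a b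
  have Ep : l2norm (Φ.mulVec (a + b)) ^ 2
      = (∑ j, (Φ.mulVec a) j ^ 2) + 2 * ((Φ.mulVec a) ⬝ᵥ (Φ.mulVec b))
        + ∑ j, (Φ.mulVec b) j ^ 2 := by
    rw [Matrix.mulVec_add, sq_l2norm]; simpa [dotProduct] using sum_expand (Φ.mulVec a) (Φ.mulVec b)
  have Em : l2norm (Φ.mulVec (a - b)) ^ 2
      = (∑ j, (Φ.mulVec a) j ^ 2) - 2 * ((Φ.mulVec a) ⬝ᵥ (Φ.mulVec b))
        + ∑ j, (Φ.mulVec b) j ^ 2 := by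
    rw [Matrix.mulVec_sub, sq_l2norm]; simpa [dotProduct] using sum_expand_sub (Φ.mulVec a) (Φ.mulVec b)
  rw [Ep, ep] at h1p h2p
  rw [Em, em] at h1m h2m
  rw [sq_l2norm a, sq_l2norm b, abs_le]
  constructor <;> nlinarith

/-- RIP inner-product estimate. -/
lemma ric_dot {Φ : Matrix (Fin M) (Fin N) ℝ} {s : ℕ} {δ : ℝ} (h : HasRIC Φ s δ)
    {a b : Fin N → ℝ} (hcard : (suppF a ∪ suppF b).card ≤ s) :
    |(Φ.mulVec a) ⬝ᵥ (Φ.mulVec b) - a ⬝ᵥ b| ≤ δ * (l2norm a * l2norm b) := by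
  by_cases ha : a = 0
  · subst ha; simp [l2norm, Matrix.mulVec_zero]
  by_cases hbz : b = 0
  · subst hbz; simp [l2norm, Matrix.mulVec_zero]
  have hna : 0 < l2norm a := lt_of_le_of_ne (l2norm_nonneg a) (fun h => ha (l2norm_eq_zero_iff.1 h.symm))
  have hnb : 0 < l2norm b := lt_of_le_of_ne (l2norm_nonneg b) (fun h => hbz (l2norm_eq_zero_iff.1 h.symm))
  set a' : Fin N → ℝ := l2norm b • a with ha'
  set b' : Fin N → ℝ := l2norm a • b with hb'
  have hcard' : (suppF a' ∪ suppF b').card ≤ s :=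
    le_trans (Finset.card_le_card (Finset.union_subset_union (suppF_smul _ _) (suppF_smul _ _))) hcard
  have hb := ric_dot_base h hcard'
  have e1 : Φ.mulVec a' = l2norm b • Φ.mulVec a := by rw [ha', Matrix.mulVec_smul]
  have e2 : Φ.mulVec b' = l2norm a • Φ.mulVec b := by rw [hb', Matrix.mulVec_smul]
  have e3 : (Φ.mulVec a') ⬝ᵥ (Φ.mulVec b')
      = l2norm a * l2norm b * ((Φ.mulVec a) ⬝ᵥ (Φ.mulVec b)) := by
    rw [e1, e2, smul_dotProduct, dotProduct_smul]
    simp [smul_eq_mul]; ring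
  have e4 : a' ⬝ᵥ b' = l2norm a * l2norm b * (a ⬝ᵥ b) := by
    rw [ha', hb', smul_dotProduct, dotProduct_smul]
    simp [smul_eq_mul]; ring
  have e5 : l2norm a' ^ 2 = l2norm b ^ 2 * l2norm a ^ 2 := by
    rw [sq_l2norm a', sq_l2norm a, Finset.mul_sum]
    exact Finset.sum_congr rfl fun i _ => by simp [ha', smul_eq_mul]; ring
  have e6 : l2norm b' ^ 2 = l2norm a ^ 2 * l2norm b ^ 2 := by
    rw [sq_l2norm b', sq_l2norm b, Finset.mul_sum]
    exact Finset.sum_congr rfl fun i _ => by simp [hb', smul_eq_mul]; ring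
  rw [e3, e4, e5, e6, ← mul_sub, abs_mul] at hb
  have hpos : 0 < l2norm a * l2norm b := mul_pos hna hnb
  rw [abs_of_pos hpos] at hb
  have : l2norm a * l2norm b * |(Φ.mulVec a) ⬝ᵥ (Φ.mulVec b) - a ⬝ᵥ b|
      ≤ l2norm a * l2norm b * (δ * (l2norm a * l2norm b)) := by nlinarith
  exact le_of_mul_le_mul_left this hpos

/-- RIP tail estimate: `‖((ΦᵀΦ - I) d)|_T‖ ≤ δ ‖d‖`. -/
lemma ric_tail {Φ : Matrix (Fin M) (Fin N) ℝ} {s : ℕ} {δ : ℝ} (h : HasRIC Φ s δ)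
    (d : Fin N → ℝ) (T : Finset (Fin N))
    (hcard : (T ∪ suppF d).card ≤ s) :
    l2norm (restr (Φ.transpose.mulVec (Φ.mulVec d) - d) T) ≤ δ * l2norm d := by
  by_cases hd : d = 0
  · subst hd
    simp only [Matrix.mulVec_zero, sub_zero]
    rw [show restr (0 : Fin N → ℝ) T = 0 from funext fun i => by simp [restr]]
    simp [l2norm]
  have hδ : 0 ≤ δ := by
    have hsp : sparsity d ≤ s := by
      rw [sparsity_eq]
      exact le_trans (Finset.card_le_card Finset.subset_union_right) hcard
    obtain ⟨h1, h2⟩ := h.2 d hsp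
    have : 0 < l2norm d ^ 2 := by rw [sq_l2norm]; exact sum_sq_pos_of_ne_zero hd
    nlinarith
  set e : Fin N → ℝ := Φ.transpose.mulVec (Φ.mulVec d) - d with he
  set g : Fin N → ℝ := restr e T with hg
  have hg2 : l2norm g ^ 2 = (Φ.mulVec g) ⬝ᵥ (Φ.mulVec d) - g ⬝ᵥ d := by
    have h1 : l2norm g ^ 2 = g ⬝ᵥ e := by
      rw [hg, dot_restr_self, restr_sq]
    rw [h1, he, dotProduct_sub]
    congr 1
    rw [Matrix.dotProduct_mulVec, Matrix.vecMul_transpose]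
  have hcard' : (suppF g ∪ suppF d).card ≤ s := by
    refine le_trans (Finset.card_le_card ?_) hcard
    exact Finset.union_subset_union (suppF_restr e T) le_rfl
  have hb := ric_dot h hcard'
  have hkey : l2norm g ^ 2 ≤ δ * (l2norm g * l2norm d) := by
    rw [hg2]
    exact le_trans (le_abs_self _) hb
  rcases eq_or_lt_of_le (l2norm_nonneg g) with h0 | h0
  · rw [← h0]; exact mul_nonneg hδ (l2norm_nonneg d)
  · nlinarith


/-- Orthogonality of the residual of a least-squares estimate. -/
lemma lse_orth {Φ : Matrix (Fin M) (Fin N) ℝ} {y : Fin M → ℝ} {Λ : Finset (Fin N)}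
    {x' : Fin N → ℝ} (hx' : IsLSE Φ y Λ x')
    {h : Fin N → ℝ} (hh : suppF h ⊆ Λ) :
    (Φ.mulVec h) ⬝ᵥ (y - Φ.mulVec x') = 0 := by
  set r : Fin M → ℝ := y - Φ.mulVec x' with hr
  set c : ℝ := (Φ.mulVec h) ⬝ᵥ r with hc
  set D : ℝ := ∑ j, (Φ.mulVec h) j ^ 2 with hD
  have hDnn : 0 ≤ D := Finset.sum_nonneg fun j _ => sq_nonneg _
  have key : ∀ t : ℝ, 0 ≤ -(2 * t * c) + t ^ 2 * D := by
    intro t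
    have hz : suppF (x' + t • h) ⊆ Λ := by
      refine le_trans (suppF_add x' (t • h)) (Finset.union_subset hx'.1 ?_)
      exact le_trans (suppF_smul t h) hh
    have hle := hx'.2 _ hz
    have hsq : l2norm r ^ 2 ≤ l2norm (y - Φ.mulVec (x' + t • h)) ^ 2 := by
      have h1 := l2norm_nonneg (y - Φ.mulVec (x' + t • h))
      nlinarith [l2norm_nonneg r]
    have hexp : l2norm (y - Φ.mulVec (x' + t • h)) ^ 2
        = l2norm r ^ 2 - 2 * t * c + t ^ 2 * D := by
      rw [sq_l2norm, sq_l2norm]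
      have : ∀ j, (y - Φ.mulVec (x' + t • h)) j = r j - t * (Φ.mulVec h) j := by
        intro j
        rw [Matrix.mulVec_add, Matrix.mulVec_smul]
        simp [hr, smul_eq_mul]
        ring
      rw [Finset.sum_congr rfl fun j _ => by rw [this j]]
      rw [show (∑ j, (r j - t * (Φ.mulVec h) j) ^ 2)
          = ∑ j, (r j ^ 2 - 2 * t * ((Φ.mulVec h) j * r j) + t ^ 2 * (Φ.mulVec h) j ^ 2) from
        Finset.sum_congr rfl fun j _ => by ring]
      rw [Finset.sum_add_distrib, Finset.sum_sub_distrib, ← Finset.mul_sum, ← Finset.mul_sum]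
      rw [hc, hD]
      rfl
    rw [hexp] at hsq
    linarith
  by_contra hne
  have hc0 : c ≠ 0 := hne
  have ht := key (c / (D + 1))
  have hD1 : (0:ℝ) < D + 1 := by linarith
  have hc2 : 0 < c ^ 2 := pow_two_pos_of_ne_zero hc0
  have h2 : 0 ≤ (-(2 * (c / (D + 1)) * c) + (c / (D + 1)) ^ 2 * D) * (D + 1) ^ 2 :=
    mul_nonneg ht (by positivity)
  have heq : (-(2 * (c / (D + 1)) * c) + (c / (D + 1)) ^ 2 * D) * (D + 1) ^ 2
      = -(2 * c ^ 2 * (D + 1)) + c ^ 2 * D := by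
    field_simp
  rw [heq] at h2
  nlinarith

/-- Comparison of sums of squares for a top support. -/
lemma top_sum {u : Fin N → ℝ} {k : ℕ} {Λ : Finset (Fin N)} (hU : IsTopSupport u k Λ)
    {A B : Finset (Fin N)} (hA : ∀ a ∈ A, a ∉ Λ) (hB : B ⊆ Λ) (hcard : A.card = B.card) :
    ∑ i ∈ A, u i ^ 2 ≤ ∑ i ∈ B, u i ^ 2 := by
  classical
  let e : A ≃ B := Finset.equivOfCardEq hcard
  calc ∑ i ∈ A, u i ^ 2 = ∑ i : A, u i ^ 2 := (Finset.sum_coe_sort A _).symm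
    _ ≤ ∑ i : A, u (e i) ^ 2 := by
        apply Finset.sum_le_sum
        intro i _
        have habs : |u i| ≤ |u (e i)| := hU.2 (e i) (hB (e i).2) i (hA i i.2)
        calc (u i : ℝ) ^ 2 = |u (i : Fin N)| ^ 2 := (sq_abs _).symm
          _ ≤ |u ((e i : B) : Fin N)| ^ 2 := by
              exact pow_le_pow_left₀ (abs_nonneg _) habs 2
          _ = u ((e i : B) : Fin N) ^ 2 := sq_abs _
    _ = ∑ j : B, u j ^ 2 := Equiv.sum_comp e (fun j : B => u (j : Fin N) ^ 2)
    _ = ∑ i ∈ B, u i ^ 2 := Finset.sum_coe_sort B (fun i => u i ^ 2)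

end HTPaux

open Matrix

set_option maxHeartbeats 1600000 in
/-- one-step decay inequality for a Hard-Thresholding-Pursuit step
with sparsity level `K'`, starting from a `Kprev`-sparse vector `w`. -/
theorem htp_step_decay {M N : ℕ} (Φ : Matrix (Fin M) (Fin N) ℝ)
    (K K' Kprev : ℕ) (δ₁ δ₂ : ℝ)
    (hRIC₁ : HasRIC Φ (K' + K) δ₁) (hRIC₂ : HasRIC Φ (K' + Kprev + K) δ₂)
    (hδ₁ : 0 ≤ δ₁)
    (x : Fin N → ℝ) (hx : sparsity x ≤ K)
    (y : Fin M → ℝ) (hy : y = Φ.mulVec x)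
    (w : Fin N → ℝ) (hw : sparsity w ≤ Kprev)
    (Λ' : Finset (Fin N))
    (hΛ' : IsTopSupport (w + Φ.transpose.mulVec (y - Φ.mulVec w)) K' Λ')
    (x' : Fin N → ℝ) (hx' : IsLSE Φ y Λ' x')
    (Γ : Finset (Fin N)) (hΓ : IsTopSupport x K' Γ) :
    l2norm (x' - x) ≤
      (Real.sqrt 2 * δ₂ / Real.sqrt (1 - δ₁ ^ 2)) * l2norm (w - x) +
        (Real.sqrt 2 / Real.sqrt (1 - δ₁ ^ 2)) * l2norm (restr x Γᶜ) := by
  classical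
  set U : Fin N → ℝ := w + Φ.transpose.mulVec (y - Φ.mulVec w) with hUdef
  set e : Fin N → ℝ := Φ.transpose.mulVec (Φ.mulVec (x - w)) - (x - w) with hedef
  have hUxe : ∀ i, U i = x i + e i := by
    intro i
    rw [hUdef, hedef, hy, ← Matrix.mulVec_sub]
    simp only [Pi.add_apply, Pi.sub_apply]
    ring
  have hsx : (suppF x).card ≤ K := hx
  have hsw : (suppF w).card ≤ Kprev := hw
  -- Part I : (1 - δ₁²) ‖x' - x‖² ≤ ‖x|_{Λ'ᶜ}‖²
  set v : Fin N → ℝ := x' - x with hvdef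
  have hsv : suppF v ⊆ Λ' ∪ suppF x :=
    le_trans (HTPaux.suppF_sub x' x) (Finset.union_subset_union hx'.1 le_rfl)
  have hvcard : (suppF (restr v Λ') ∪ suppF v).card ≤ K' + K := by
    have h1 : suppF (restr v Λ') ∪ suppF v ⊆ Λ' ∪ suppF x :=
      Finset.union_subset (le_trans (HTPaux.suppF_restr_self v Λ') hsv) hsv
    refine le_trans (Finset.card_le_card h1) (le_trans (Finset.card_union_le _ _) ?_)
    rw [hΛ'.1]
    exact add_le_add le_rfl hsx
  have orth : (Φ.mulVec (restr v Λ')) ⬝ᵥ (y - Φ.mulVec x') = 0 :=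
    HTPaux.lse_orth hx' (HTPaux.suppF_restr v Λ')
  have hΦv : Φ.mulVec v = -(y - Φ.mulVec x') := by
    rw [hvdef, hy, Matrix.mulVec_sub, neg_sub]
  have hdot0 : (Φ.mulVec (restr v Λ')) ⬝ᵥ (Φ.mulVec v) = 0 := by
    rw [hΦv, dotProduct_neg, orth, neg_zero]
  have hRdot := HTPaux.ric_dot hRIC₁ hvcard
  have hdrv : (restr v Λ') ⬝ᵥ v = l2norm (restr v Λ') ^ 2 := by
    rw [HTPaux.dot_restr_self, HTPaux.restr_sq]
  rw [hdot0, zero_sub, abs_neg, hdrv, abs_of_nonneg (sq_nonneg _)] at hRdot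
  have hvL : l2norm (restr v Λ') ≤ δ₁ * l2norm v := by
    rcases eq_or_lt_of_le (HTPaux.l2norm_nonneg (restr v Λ')) with h0 | h0
    · rw [← h0]; exact mul_nonneg hδ₁ (HTPaux.l2norm_nonneg v)
    · nlinarith
  have hsplit : l2norm v ^ 2 = l2norm (restr v Λ') ^ 2 + l2norm (restr v Λ'ᶜ) ^ 2 := by
    rw [HTPaux.sq_l2norm, HTPaux.restr_sq, HTPaux.restr_sq]
    exact (Finset.sum_add_sum_compl Λ' _).symm
  have hcompl : l2norm (restr v Λ'ᶜ) ^ 2 = l2norm (restr x Λ'ᶜ) ^ 2 := by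
    rw [HTPaux.restr_sq, HTPaux.restr_sq]
    refine Finset.sum_congr rfl fun i hi => ?_
    have hiΛ : i ∉ Λ' := Finset.mem_compl.1 hi
    have hx'0 : x' i = 0 := by
      by_contra hne
      exact hiΛ (hx'.1 (Finset.mem_filter.2 ⟨Finset.mem_univ i, hne⟩))
    rw [hvdef, Pi.sub_apply, hx'0]
    ring
  set R := l2norm (restr x Λ'ᶜ) with hR
  have hI : (1 - δ₁ ^ 2) * l2norm v ^ 2 ≤ R ^ 2 := by
    nlinarith [HTPaux.l2norm_nonneg v, HTPaux.l2norm_nonneg (restr v Λ'), hδ₁, hvL, hsplit,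
      hcompl]
  -- Part II : ‖x|_{Λ'ᶜ}‖ ≤ √2 δ₂ ‖x - w‖ + ‖x|_{Γᶜ}‖
  set A : Finset (Fin N) := (Γ ∩ suppF x) \ Λ' with hA
  have hAcard : A.card ≤ (Λ' \ Γ).card := by
    refine le_trans (Finset.card_le_card
      (Finset.sdiff_subset_sdiff Finset.inter_subset_left le_rfl)) ?_
    exact le_of_eq (Finset.card_sdiff_comm (hΓ.1.trans hΛ'.1.symm))
  obtain ⟨B, hBsub, hBcard⟩ := Finset.exists_subset_card_eq hAcard
  have hBΛ : B ⊆ Λ' := hBsub.trans Finset.sdiff_subset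
  have hdom : ∑ i ∈ A, U i ^ 2 ≤ ∑ i ∈ B, U i ^ 2 :=
    HTPaux.top_sum hΛ' (fun a ha => (Finset.mem_sdiff.1 ha).2) hBΛ hBcard.symm
  have hdom' : l2norm (restr U A) ≤ l2norm (restr U B) := by
    rw [HTPaux.l2norm_restr, HTPaux.l2norm_restr]
    exact Real.sqrt_le_sqrt hdom
  have hxA' : l2norm (restr x A) ≤ l2norm (restr U A) + l2norm (restr e A) := by
    have hxA : restr x A = restr U A + restr (-e) A := by
      funext i
      simp only [restr, Pi.add_apply, Pi.neg_apply]
      by_cases hi : i ∈ A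
      · simp only [hi, if_true]
        have := hUxe i
        linarith
      · simp [hi]
    rw [hxA]
    refine le_trans (HTPaux.l2norm_add_le _ _) ?_
    have hne : restr (-e) A = -(restr e A) := by
      funext i
      by_cases hi : i ∈ A <;> simp [restr, hi]
    rw [hne, HTPaux.l2norm_neg]
  have hUB' : l2norm (restr U B) ≤ l2norm (restr x B) + l2norm (restr e B) := by
    have hUB : restr U B = restr x B + restr e B := by
      funext i
      simp only [restr, Pi.add_apply]
      by_cases hi : i ∈ B
      · simp only [hi, if_true]
        exact hUxe i
      · simp [hi]
    rw [hUB]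
    exact HTPaux.l2norm_add_le _ _
  set c1 := l2norm (restr x (Γᶜ ∩ Λ')) with hc1
  set c2 := l2norm (restr x (Γᶜ \ Λ')) with hc2
  set c := l2norm (restr x Γᶜ) with hc
  have hcsplit : c1 ^ 2 + c2 ^ 2 = c ^ 2 := by
    rw [hc1, hc2, hc, HTPaux.restr_sq, HTPaux.restr_sq, HTPaux.restr_sq]
    exact Finset.sum_inter_add_sum_sdiff Γᶜ Λ' _
  have hxB : l2norm (restr x B) ≤ c1 := by
    refine HTPaux.restr_mono x ?_
    intro i hi
    have hmem := Finset.mem_sdiff.1 (hBsub hi)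
    exact Finset.mem_inter.2 ⟨Finset.mem_compl.2 hmem.2, hmem.1⟩
  set t := l2norm (x - w) with ht
  have hecard : ((A ∪ B) ∪ suppF (x - w)).card ≤ K' + Kprev + K := by
    have hsub : (A ∪ B) ∪ suppF (x - w) ⊆ Λ' ∪ (suppF x ∪ suppF w) := by
      refine Finset.union_subset (Finset.union_subset ?_ ?_) ?_
      · intro i hi
        exact Finset.mem_union_right _
          (Finset.mem_union_left _ (Finset.mem_inter.1 (Finset.mem_sdiff.1 hi).1).2)
      · intro i hi
        exact Finset.mem_union_left _ (hBΛ hi)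
      · intro i hi
        exact Finset.mem_union_right _ (HTPaux.suppF_sub x w hi)
    calc ((A ∪ B) ∪ suppF (x - w)).card
        ≤ (Λ' ∪ (suppF x ∪ suppF w)).card := Finset.card_le_card hsub
      _ ≤ Λ'.card + (suppF x ∪ suppF w).card := Finset.card_union_le _ _
      _ ≤ Λ'.card + ((suppF x).card + (suppF w).card) :=
          add_le_add le_rfl (Finset.card_union_le _ _)
      _ ≤ K' + (K + Kprev) := by
          rw [hΛ'.1]
          exact add_le_add le_rfl (add_le_add hsx hsw)
      _ = K' + Kprev + K := by omega
  have hE := HTPaux.ric_tail hRIC₂ (x - w) (A ∪ B) hecard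
  rw [← hedef, ← ht] at hE
  have hABdisj : Disjoint A B := by
    rw [Finset.disjoint_left]
    intro i hiA hiB
    exact (Finset.mem_sdiff.1 hiA).2 (hBΛ hiB)
  have hEsplit : l2norm (restr e A) ^ 2 + l2norm (restr e B) ^ 2
      = l2norm (restr e (A ∪ B)) ^ 2 := by
    rw [HTPaux.restr_sq, HTPaux.restr_sq, HTPaux.restr_sq]
    exact (Finset.sum_union hABdisj).symm
  set s := Real.sqrt 2 * (δ₂ * t) with hs
  have hsum_e : l2norm (restr e A) + l2norm (restr e B) ≤ s := by
    have h1 : l2norm (restr e A) + l2norm (restr e B)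
        ≤ Real.sqrt 2 * l2norm (restr e (A ∪ B)) := by
      apply HTPaux.le_of_sq_le_sq
        (mul_nonneg (Real.sqrt_nonneg 2) (HTPaux.l2norm_nonneg _)) _
        (add_nonneg (HTPaux.l2norm_nonneg _) (HTPaux.l2norm_nonneg _))
      rw [mul_pow, Real.sq_sqrt (by norm_num : (0:ℝ) ≤ 2), ← hEsplit]
      nlinarith [sq_nonneg (l2norm (restr e A) - l2norm (restr e B))]
    refine le_trans h1 ?_
    rw [hs]
    exact mul_le_mul_of_nonneg_left hE (Real.sqrt_nonneg 2)
  have hs0 : 0 ≤ s :=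
    le_trans (add_nonneg (HTPaux.l2norm_nonneg (restr e A)) (HTPaux.l2norm_nonneg (restr e B)))
      hsum_e
  have haxA : l2norm (restr x A) ≤ c1 + s := by
    have := hxA'
    have := hdom'
    have := hUB'
    have := hxB
    linarith [hsum_e]
  have hLsplit : R ^ 2 ≤ l2norm (restr x A) ^ 2 + c2 ^ 2 := by
    rw [hR, hc2, HTPaux.restr_sq, HTPaux.restr_sq, HTPaux.restr_sq]
    have hsplit2 : ∑ i ∈ Λ'ᶜ, x i ^ 2
        = ∑ i ∈ Λ'ᶜ ∩ (Γ ∩ suppF x), x i ^ 2 + ∑ i ∈ Λ'ᶜ \ (Γ ∩ suppF x), x i ^ 2 :=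
      (Finset.sum_inter_add_sum_sdiff _ _ _).symm
    have hAeq : Λ'ᶜ ∩ (Γ ∩ suppF x) = A := by
      ext i
      simp only [hA, Finset.mem_compl, Finset.mem_sdiff, Finset.mem_inter]
      tauto
    have h2 : ∑ i ∈ Λ'ᶜ \ (Γ ∩ suppF x), x i ^ 2 ≤ ∑ i ∈ Γᶜ \ Λ', x i ^ 2 := by
      have hzero : ∀ i ∈ Λ'ᶜ \ (Γ ∩ suppF x),
          i ∉ (Λ'ᶜ \ (Γ ∩ suppF x)) ∩ suppF x → x i ^ 2 = 0 := by
        intro i hi hni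
        have hns : i ∉ suppF x := fun hmem => hni (Finset.mem_inter.2 ⟨hi, hmem⟩)
        have hx0 : x i = 0 := by
          by_contra hxi
          exact hns (Finset.mem_filter.2 ⟨Finset.mem_univ i, hxi⟩)
        rw [hx0]
        ring
      rw [← Finset.sum_subset Finset.inter_subset_left hzero]
      apply Finset.sum_le_sum_of_subset_of_nonneg
      · intro i hi
        obtain ⟨hi1, hi2⟩ := Finset.mem_inter.1 hi
        obtain ⟨hic, hni⟩ := Finset.mem_sdiff.1 hi1
        have hnG : i ∉ Γ := fun hG => hni (Finset.mem_inter.2 ⟨hG, hi2⟩)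
        exact Finset.mem_sdiff.2 ⟨Finset.mem_compl.2 hnG, Finset.mem_compl.1 hic⟩
      · intro i _ _
        exact sq_nonneg _
    rw [hsplit2, hAeq]
    linarith
  have hII : R ≤ s + c := by
    have hc1c : c1 ≤ c := HTPaux.restr_mono x Finset.inter_subset_left
    apply HTPaux.le_of_sq_le_sq (add_nonneg hs0 (HTPaux.l2norm_nonneg (restr x Γᶜ))) _
      (HTPaux.l2norm_nonneg (restr x Λ'ᶜ))
    have haxA2 : l2norm (restr x A) ^ 2 ≤ (c1 + s) ^ 2 := by
      nlinarith [HTPaux.l2norm_nonneg (restr x A), haxA]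
    nlinarith [hcsplit, hLsplit, haxA2, hc1c, hs0,
      HTPaux.l2norm_nonneg (restr x (Γᶜ ∩ Λ')), HTPaux.l2norm_nonneg (restr x Γᶜ)]
  -- Final combination
  have hpos : 0 < 1 - δ₁ ^ 2 := by nlinarith [hRIC₁.1, hδ₁]
  have hsq2 : 0 < Real.sqrt (1 - δ₁ ^ 2) := Real.sqrt_pos.2 hpos
  have hvR : l2norm v * Real.sqrt (1 - δ₁ ^ 2) ≤ R := by
    apply HTPaux.le_of_sq_le_sq (HTPaux.l2norm_nonneg (restr x Λ'ᶜ)) _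
      (mul_nonneg (HTPaux.l2norm_nonneg v) (Real.sqrt_nonneg _))
    rw [mul_pow, Real.sq_sqrt hpos.le]
    calc l2norm v ^ 2 * (1 - δ₁ ^ 2) = (1 - δ₁ ^ 2) * l2norm v ^ 2 := by ring
      _ ≤ R ^ 2 := hI
  have htw : t = l2norm (w - x) := by rw [ht]; exact HTPaux.l2norm_sub_comm x w
  rw [← mul_le_mul_iff_of_pos_right hsq2]
  calc l2norm v * Real.sqrt (1 - δ₁ ^ 2) ≤ R := hvR
    _ ≤ s + c := hII
    _ ≤ Real.sqrt 2 * δ₂ * l2norm (w - x) + Real.sqrt 2 * c := by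
        have h1 : s = Real.sqrt 2 * δ₂ * l2norm (w - x) := by rw [hs, htw]; ring
        have h2 : c ≤ Real.sqrt 2 * c := by
          have hone : (1:ℝ) ≤ Real.sqrt 2 := by
            rw [show (1:ℝ) = Real.sqrt 1 from Real.sqrt_one.symm]
            exact Real.sqrt_le_sqrt one_le_two
          nlinarith [HTPaux.l2norm_nonneg (restr x Γᶜ)]
        linarith
    _ = ((Real.sqrt 2 * δ₂ / Real.sqrt (1 - δ₁ ^ 2)) * l2norm (w - x)
          + (Real.sqrt 2 / Real.sqrt (1 - δ₁ ^ 2)) * c) * Real.sqrt (1 - δ₁ ^ 2) := by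
        field_simp
end
end

section
/- Suppose y = Φx where x ∈ ℝ^N is K-sparse with 2 ≤ K ≤ K̄ and the K nonzero entries of x have magnitudes α, 2α, …, Kα with α = √(6‖x‖²/(K(K+1)(2K+1))) (linear signal profile, so x_min = α, x_max = Kα and R = K). If Φ has restricted isometry constant δ := δ_{2K̄+K} of order 2K̄+K satisfying δ < 1/(1+(3+5K)√(2K)), and 0 < ε < (6(1−δ)‖x‖²/((1+δ)²K(K+1)(2K+1)))·(a_K(δ) − K·b(δ))², then at every iteration t of MCHTP at which min(K_{t,0}, K_{t,1}) < K, one has ΔE_t > ε and K_t = max(K_{t,0}, K_{t,1}). -/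
open Finset

noncomputable section

section Helpers
variable {M N : ℕ}

/-- squared l2 norm -/
def n2 {n : ℕ} (v : Fin n → ℝ) : ℝ := ∑ i, (v i) ^ 2

lemma n2_nonneg {n : ℕ} (v : Fin n → ℝ) : 0 ≤ n2 v :=
  Finset.sum_nonneg fun i _ => sq_nonneg _

lemma l2_sq {n : ℕ} (v : Fin n → ℝ) : (l2norm v) ^ 2 = n2 v :=
  Real.sq_sqrt (n2_nonneg v)

lemma l2_nonneg {n : ℕ} (v : Fin n → ℝ) : 0 ≤ l2norm v := Real.sqrt_nonneg _

lemma n2_eq_zero {n : ℕ} {v : Fin n → ℝ} (h : n2 v = 0) : v = 0 := by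
  funext i
  have := (Finset.sum_eq_zero_iff_of_nonneg (fun i _ => sq_nonneg (v i))).1 h i (Finset.mem_univ i)
  simpa using pow_eq_zero_iff (n := 2) (by norm_num) |>.1 this

lemma sparsity_le_of_suppF {n : ℕ} {v : Fin n → ℝ} {S : Finset (Fin n)}
    (h : suppF v ⊆ S) : sparsity v ≤ S.card := Finset.card_le_card h

lemma mem_suppF {n : ℕ} {v : Fin n → ℝ} {i : Fin n} : i ∈ suppF v ↔ v i ≠ 0 := by
  simp [suppF]

lemma suppF_add_subset {n : ℕ} (u w : Fin n → ℝ) :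
    suppF (u + w) ⊆ suppF u ∪ suppF w := by
  intro i hi
  simp only [mem_suppF, Pi.add_apply] at hi
  simp only [Finset.mem_union, mem_suppF]
  by_contra hc
  push_neg at hc
  exact hi (by rw [hc.1, hc.2]; ring)

lemma suppF_sub_subset {n : ℕ} (u w : Fin n → ℝ) :
    suppF (u - w) ⊆ suppF u ∪ suppF w := by
  intro i hi
  simp only [mem_suppF, Pi.sub_apply] at hi
  simp only [Finset.mem_union, mem_suppF]
  by_contra hc
  push_neg at hc
  exact hi (by rw [hc.1, hc.2]; ring)

end Helpers
section Helpers2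
variable {M N : ℕ}

lemma ric_lower {Φ : Matrix (Fin M) (Fin N) ℝ} {s : ℕ} {δ : ℝ} (h : HasRIC Φ s δ)
    {z : Fin N → ℝ} (hz : sparsity z ≤ s) :
    (1 - δ) * n2 z ≤ n2 (Φ.mulVec z) := by
  have := (h.2 z hz).1
  rwa [l2_sq, l2_sq] at this

lemma ric_upper {Φ : Matrix (Fin M) (Fin N) ℝ} {s : ℕ} {δ : ℝ} (h : HasRIC Φ s δ)
    {z : Fin N → ℝ} (hz : sparsity z ≤ s) :
    n2 (Φ.mulVec z) ≤ (1 + δ) * n2 z := by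
  have := (h.2 z hz).2
  rwa [l2_sq, l2_sq] at this

example (Φ : Matrix (Fin M) (Fin N) ℝ) (a b : Fin N → ℝ) :
    Φ.mulVec (a + b) = Φ.mulVec a + Φ.mulVec b := Matrix.mulVec_add Φ a b

example (Φ : Matrix (Fin M) (Fin N) ℝ) (a b : Fin N → ℝ) :
    Φ.mulVec (a - b) = Φ.mulVec a - Φ.mulVec b := Matrix.mulVec_sub Φ a b

/-- inner product -/
def ip {n : ℕ} (u w : Fin n → ℝ) : ℝ := ∑ i, u i * w i

lemma n2_add {n : ℕ} (u w : Fin n → ℝ) : n2 (u + w) = n2 u + 2 * ip u w + n2 w := by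
  simp only [n2, ip, Pi.add_apply, ← Finset.sum_add_distrib, Finset.mul_sum]
  exact Finset.sum_congr rfl fun i _ => by ring

lemma n2_sub {n : ℕ} (u w : Fin n → ℝ) : n2 (u - w) = n2 u - 2 * ip u w + n2 w := by
  simp only [n2, ip, Pi.sub_apply, ← Finset.sum_add_distrib, ← Finset.sum_sub_distrib, Finset.mul_sum]
  exact Finset.sum_congr rfl fun i _ => by ring

end Helpers2
section Helpers3
variable {M N : ℕ}

lemma entry_bound {Φ : Matrix (Fin M) (Fin N) ℝ} {s : ℕ} {δ : ℝ}
    (h : HasRIC Φ s δ) {d : Fin N → ℝ} (hd : sparsity d + 1 ≤ s) (i : Fin N) :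
    |Φ.transpose.mulVec (Φ.mulVec d) i - d i| ≤ δ * Real.sqrt (n2 d) := by
  by_cases hzero : n2 d = 0
  · have hd0 : d = 0 := n2_eq_zero hzero
    subst hd0
    simp [Matrix.mulVec_zero, hzero]
  have hc2 : 0 < n2 d := lt_of_le_of_ne (n2_nonneg d) (Ne.symm hzero)
  set c := Real.sqrt (n2 d) with hc
  have hcpos : 0 < c := Real.sqrt_pos.2 hc2
  have hcsq : c ^ 2 = n2 d := Real.sq_sqrt (n2_nonneg d)
  set w : Fin N → ℝ := fun j => if j = i then c else 0 with hw
  have hn2w : n2 w = n2 d := by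
    have hcoord : ∀ j, (w j) ^ 2 = if j = i then c ^ 2 else 0 := by
      intro j; by_cases hji : j = i <;> simp [hw, hji]
    rw [n2]
    simp only [hcoord, Finset.sum_ite_eq' Finset.univ i, Finset.mem_univ, if_true, hcsq]
  have hsuppw : suppF w ⊆ {i} := by
    intro j hj
    rw [mem_suppF] at hj
    simp only [Finset.mem_singleton]
    by_contra hji
    simp [hw, hji] at hj
  have hsp : ∀ z : Fin N → ℝ, suppF z ⊆ suppF d ∪ suppF w → sparsity z ≤ s := by
    intro z hz
    have h1 : sparsity z ≤ (suppF d ∪ suppF w).card := sparsity_le_of_suppF hz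
    have h2 : (suppF d ∪ suppF w).card ≤ (suppF d).card + (suppF w).card :=
      Finset.card_union_le _ _
    have h3 : (suppF w).card ≤ 1 := by
      calc (suppF w).card ≤ ({i} : Finset (Fin N)).card := Finset.card_le_card hsuppw
        _ = 1 := Finset.card_singleton i
    have : (suppF d).card = sparsity d := rfl
    omega
  have hAu := ric_upper h (hsp _ (suppF_add_subset d w))
  have hAl := ric_lower h (hsp _ (suppF_add_subset d w))
  have hBu := ric_upper h (hsp _ (suppF_sub_subset d w))
  have hBl := ric_lower h (hsp _ (suppF_sub_subset d w))
  rw [Matrix.mulVec_add] at hAu hAl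
  rw [Matrix.mulVec_sub] at hBu hBl
  rw [n2_add (Φ.mulVec d), n2_add d, n2_sub (Φ.mulVec d), n2_sub d] at *
  have hipdw : ip d w = c * d i := by
    rw [ip]
    have hcoord : ∀ j, d j * w j = if j = i then c * d i else 0 := by
      intro j; by_cases hji : j = i <;> simp [hw, hji, mul_comm]
    simp only [hcoord, Finset.sum_ite_eq' Finset.univ i, Finset.mem_univ, if_true]
  have hPhw : Φ.mulVec w = fun m => Φ m i * c := by
    funext m
    simp only [Matrix.mulVec, dotProduct]
    have hcoord : ∀ j, Φ m j * w j = if j = i then Φ m i * c else 0 := by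
      intro j; by_cases hji : j = i <;> simp [hw, hji]
    simp only [hcoord, Finset.sum_ite_eq' Finset.univ i, Finset.mem_univ, if_true]
  have hipPhw : ip (Φ.mulVec d) (Φ.mulVec w) = c * Φ.transpose.mulVec (Φ.mulVec d) i := by
    rw [ip, hPhw]
    simp only [Matrix.mulVec, dotProduct, Matrix.transpose_apply]
    rw [Finset.mul_sum]
    exact Finset.sum_congr rfl fun m _ => by ring
  set p := n2 (Φ.mulVec d) + 2 * ip (Φ.mulVec d) (Φ.mulVec w) + n2 (Φ.mulVec w)
    - (n2 d + 2 * ip d w + n2 w) with hp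
  set q := n2 (Φ.mulVec d) - 2 * ip (Φ.mulVec d) (Φ.mulVec w) + n2 (Φ.mulVec w)
    - (n2 d - 2 * ip d w + n2 w) with hq
  have hδ0 : 0 ≤ δ := by
    by_contra hneg
    push_neg at hneg
    nlinarith [hAl, hAu, n2_nonneg w, hn2w, hc2]
  have h1 : |p| ≤ δ * (n2 d + 2 * ip d w + n2 w) := by
    rw [abs_le]; constructor <;> [nlinarith [hAl]; nlinarith [hAu]]
  have h2 : |q| ≤ δ * (n2 d - 2 * ip d w + n2 w) := by
    rw [abs_le]; constructor <;> [nlinarith [hBl]; nlinarith [hBu]]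
  have key : |ip (Φ.mulVec d) (Φ.mulVec w) - ip d w| ≤ δ * n2 d := by
    have e1 : ip (Φ.mulVec d) (Φ.mulVec w) - ip d w = (p - q) / 4 := by
      rw [hp, hq]; ring
    rw [e1]
    have htri : |p - q| ≤ |p| + |q| := by
      rw [sub_eq_add_neg]
      exact (abs_add_le p (-q)).trans (by rw [abs_neg])
    rw [abs_div]
    have h4 : |(4:ℝ)| = 4 := by norm_num
    rw [h4]
    rw [div_le_iff₀ (by norm_num : (0:ℝ) < 4)]
    calc |p - q| ≤ |p| + |q| := htri
      _ ≤ δ * (n2 d + 2 * ip d w + n2 w) + δ * (n2 d - 2 * ip d w + n2 w) := add_le_add h1 h2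
      _ = δ * n2 d * 4 := by rw [hn2w]; ring
  rw [hipPhw, hipdw, ← mul_sub, abs_mul, abs_of_pos hcpos] at key
  have : |Φ.transpose.mulVec (Φ.mulVec d) i - d i| ≤ δ * n2 d / c := by
    rw [le_div_iff₀ hcpos]
    calc |Φ.transpose.mulVec (Φ.mulVec d) i - d i| * c
        = c * |Φ.transpose.mulVec (Φ.mulVec d) i - d i| := by ring
      _ ≤ δ * n2 d := key
  calc |Φ.transpose.mulVec (Φ.mulVec d) i - d i| ≤ δ * n2 d / c := this
    _ = δ * c := by rw [← hcsq]; field_simp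
end Helpers3
section Helpers4

lemma sum_range_le_sum_nat {f : ℕ → ℝ} (hmono : Monotone f) (hpos : ∀ n, 0 ≤ f n) :
    ∀ (Q : ℕ) (T : Finset ℕ), Q ≤ T.card → ∑ r ∈ Finset.range Q, f r ≤ ∑ t ∈ T, f t := by
  intro Q
  induction Q with
  | zero => intro T _; simp [Finset.sum_nonneg fun t _ => hpos t]
  | succ Q ih =>
    intro T hT
    have hne : T.Nonempty := Finset.card_pos.1 (by omega)
    set Mx := T.max' hne with hMx
    have hMmem : Mx ∈ T := T.max'_mem hne
    have hsub : T ⊆ Finset.range (Mx + 1) := by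
      intro t ht
      rw [Finset.mem_range]
      have := Finset.le_max' T t ht
      omega
    have hMle : Q + 1 ≤ Mx + 1 := by
      have := Finset.card_le_card hsub
      rw [Finset.card_range] at this
      omega
    have hcard : Q ≤ (T.erase Mx).card := by
      rw [Finset.card_erase_of_mem hMmem]; omega
    calc ∑ r ∈ Finset.range (Q + 1), f r = ∑ r ∈ Finset.range Q, f r + f Q :=
          Finset.sum_range_succ f Q
      _ ≤ ∑ t ∈ T.erase Mx, f t + f Mx := add_le_add (ih _ hcard) (hmono (by omega))
      _ = ∑ t ∈ T, f t := Finset.sum_erase_add T f hMmem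

lemma sum_range_le_sum_fin {K : ℕ} {f : ℕ → ℝ} (hmono : Monotone f) (hpos : ∀ n, 0 ≤ f n)
    (Q : ℕ) (J : Finset (Fin K)) (hJ : Q ≤ J.card) :
    ∑ r ∈ Finset.range Q, f r ≤ ∑ j ∈ J, f (j : ℕ) := by
  have himg : ∑ t ∈ J.image (Fin.val), f t = ∑ j ∈ J, f (j : ℕ) :=
    Finset.sum_image (fun a _ b _ hab => Fin.val_injective hab)
  rw [← himg]
  apply sum_range_le_sum_nat hmono hpos
  rw [Finset.card_image_of_injective J Fin.val_injective]
  exact hJ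

lemma sum_fin_le_sum_range {K : ℕ} {f : ℕ → ℝ} (hpos : ∀ n, 0 ≤ f n)
    (c : ℕ) (J : Finset (Fin K)) (hJ : ∀ j ∈ J, (j : ℕ) < c) :
    ∑ j ∈ J, f (j : ℕ) ≤ ∑ r ∈ Finset.range c, f r := by
  have himg : ∑ t ∈ J.image (Fin.val), f t = ∑ j ∈ J, f (j : ℕ) :=
    Finset.sum_image (fun a _ b _ hab => Fin.val_injective hab)
  rw [← himg]
  apply Finset.sum_le_sum_of_subset_of_nonneg
  · intro t ht
    rw [Finset.mem_range]
    obtain ⟨j, hjJ, rfl⟩ := Finset.mem_image.1 ht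
    exact hJ j hjJ
  · intro t _ _; exact hpos t

end Helpers4
section Helpers5

lemma sum_sq_le_cube (n : ℕ) : (∑ r ∈ Finset.range n, ((r:ℝ)+1)^2) ≤ (n:ℝ)^3 := by
  calc (∑ r ∈ Finset.range n, ((r:ℝ)+1)^2) ≤ ∑ _r ∈ Finset.range n, (n:ℝ)^2 := by
        apply Finset.sum_le_sum
        intro r hr
        rw [Finset.mem_range] at hr
        have h1 : (r:ℝ) + 1 ≤ (n:ℝ) := by exact_mod_cast Nat.succ_le_of_lt hr
        have h0 : (0:ℝ) ≤ (r:ℝ) + 1 := by positivity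
        nlinarith
    _ = (n:ℝ) * (n:ℝ)^2 := by rw [Finset.sum_const, Finset.card_range]; ring
    _ = (n:ℝ)^3 := by ring

lemma capture_lemma {N K : ℕ} {x h : Fin N → ℝ} {σ : Fin K → Fin N} {α ed : ℝ}
    (hσsupp : ∀ i, x i ≠ 0 ↔ ∃ j, σ j = i)
    (hσval : ∀ j : Fin K, |x (σ j)| = α * ((j : ℕ) + 1))
    (hσinj : Function.Injective σ)
    (hα0 : 0 ≤ α) (hed0 : 0 ≤ ed)
    (hEB : ∀ i, |h i - x i| ≤ ed) (h2ed : 2 * ed < α)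
    {k' : ℕ} {Λ' : Finset (Fin N)} (hTop' : IsTopSupport h k' Λ') :
    ∀ j : Fin K, K - k' ≤ (j : ℕ) → σ j ∈ Λ' := by
  intro j hj
  by_contra hnot
  set c := K - k' with hcdef
  set G := (Finset.univ.filter fun j : Fin K => c ≤ (j : ℕ)).image σ with hG
  have hGcard : G.card ≤ k' := by
    rw [hG, Finset.card_image_of_injective _ hσinj]
    have h1 : ((Finset.univ.filter fun j : Fin K => c ≤ (j : ℕ))).card ≤ (Finset.range (K - c)).card := by
      refine Finset.card_le_card_of_injOn (fun j => (j : ℕ) - c) ?_ ?_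
      · intro a ha
        rw [Finset.mem_coe, Finset.mem_filter] at ha
        rw [Finset.mem_coe, Finset.mem_range]
        show (a : ℕ) - c < K - c
        have := a.isLt
        omega
      · intro a ha b hb hab
        rw [Finset.mem_coe, Finset.mem_filter] at ha hb
        have h2 := a.isLt; have h3 := b.isLt
        apply Fin.ext
        have hab' : (a : ℕ) - c = (b : ℕ) - c := hab
        omega
    rw [Finset.card_range] at h1
    omega
  have hjG : σ j ∈ G := by
    rw [hG, Finset.mem_image]
    exact ⟨j, Finset.mem_filter.2 ⟨Finset.mem_univ j, hj⟩, rfl⟩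
  -- find i ∈ Λ' \ G
  have hexists : ∃ i ∈ Λ', i ∉ G := by
    by_contra hno
    push_neg at hno
    have hsub : Λ' ⊆ G.erase (σ j) := by
      intro i hi
      rw [Finset.mem_erase]
      exact ⟨fun hij => hnot (hij ▸ hi), hno i hi⟩
    have := Finset.card_le_card hsub
    rw [Finset.card_erase_of_mem hjG, hTop'.1] at this
    omega
  obtain ⟨i, hiΛ, hiG⟩ := hexists
  have htop := hTop'.2 i hiΛ (σ j) hnot
  -- |x i| ≤ α * c
  have hxi : |x i| ≤ α * c := by
    by_cases hxi0 : x i = 0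
    · rw [hxi0, abs_zero]; positivity
    · obtain ⟨j'', hj''⟩ := (hσsupp i).1 hxi0
      have hj''c : (j'' : ℕ) < c := by
        by_contra hge
        push_neg at hge
        exact hiG (hG ▸ Finset.mem_image.2 ⟨j'', Finset.mem_filter.2 ⟨Finset.mem_univ _, hge⟩, hj''⟩)
      rw [← hj'', hσval j'']
      have : ((j'' : ℕ) : ℝ) + 1 ≤ (c : ℝ) := by exact_mod_cast Nat.succ_le_of_lt hj''c
      nlinarith
  have hxj : α * ((c : ℝ) + 1) ≤ |x (σ j)| := by
    rw [hσval j]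
    have : (c : ℝ) + 1 ≤ ((j : ℕ) : ℝ) + 1 := by
      have : (c : ℝ) ≤ ((j : ℕ) : ℝ) := by exact_mod_cast hj
      linarith
    nlinarith
  have e1 : |x (σ j)| - ed ≤ |h (σ j)| := by
    have t1 := hEB (σ j)
    have t2 := abs_sub_abs_le_abs_sub (x (σ j)) (h (σ j))
    rw [abs_sub_comm] at t2
    linarith
  have e2 : |h i| ≤ |x i| + ed := by
    have t1 := hEB i
    have t2 := abs_sub_abs_le_abs_sub (h i) (x i)
    linarith
  have : α * ((c:ℝ) + 1) - ed ≤ α * c + ed := by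
    calc α * ((c:ℝ) + 1) - ed ≤ |x (σ j)| - ed := by linarith
      _ ≤ |h (σ j)| := e1
      _ ≤ |h i| := htop
      _ ≤ |x i| + ed := e2
      _ ≤ α * c + ed := by linarith
  nlinarith

end Helpers5
section Scalars

lemma scalar_deltaK {Kr s δ : ℝ} (hKr : 2 ≤ Kr) (hs0 : 0 ≤ s) (hssq : s^2 = 2*Kr)
    (hδ0 : 0 ≤ δ) (hδ1 : δ * (1 + (3 + 5*Kr)*s) < 1) :
    50 * Kr^3 * δ^2 < 1 ∧ δ < 1/20 := by
  have h5 : 5 * Kr * s * δ ≤ δ * (1 + (3 + 5*Kr)*s) := by nlinarith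
  have h5b : 5 * Kr * s * δ < 1 := lt_of_le_of_lt h5 hδ1
  have h5c : 0 ≤ 5 * Kr * s * δ := by positivity
  have ha2 : (5 * Kr * s * δ)^2 = 50 * Kr^3 * δ^2 := by
    have e : (5 * Kr * s * δ)^2 = 25 * Kr^2 * s^2 * δ^2 := by ring
    rw [e, hssq]; ring
  have hsq : (5*Kr*s*δ) * (5*Kr*s*δ) ≤ (5*Kr*s*δ) * 1 := mul_le_mul_of_nonneg_left h5b.le h5c
  have hK : 50 * Kr^3 * δ^2 < 1 := by nlinarith [hsq, ha2, h5b]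
  refine ⟨hK, ?_⟩
  have hK38 : (8:ℝ) ≤ Kr^3 := by
    have hcube : 0 ≤ (Kr-2)*(Kr^2+2*Kr+4) := mul_nonneg (by linarith) (by nlinarith [sq_nonneg Kr])
    nlinarith [hcube]
  have hd2 : δ^2 < 1/400 := by nlinarith [sq_nonneg δ, hK, hK38]
  nlinarith [hd2, hδ0, sq_nonneg (δ - 1/20)]

lemma scalar_ed {Kr δ : ℝ} (hδ0 : 0 ≤ δ) (hδK : 50 * Kr^3 * δ^2 < 1) (hδ20 : δ < 1/20)
    (hKr : 2 ≤ Kr) :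
    4 * (1 + δ) * (δ^2 * Kr^3) < 1 - δ := by
  have h0 : 0 ≤ δ^2 * Kr^3 := by positivity
  nlinarith

lemma scalar_key {δ Qr Sq : ℝ} (hδ0 : 0 ≤ δ) (hQr1 : 1 ≤ Qr) (hSg0 : 0 ≤ Sq)
    (hSg3 : Sq ≤ Qr^3) (h6Q : 6 * δ * Qr ≤ 1) :
    1/2 ≤ (1 - δ) * (Sq + Qr^2) - (1 + δ) * Sq := by
  have hQr2 : (1:ℝ) ≤ Qr^2 := by nlinarith
  have hQr23 : Qr^2 ≤ Qr^3 := by nlinarith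
  nlinarith [mul_le_mul_of_nonneg_left hSg3 (show (0:ℝ) ≤ 2*δ by linarith),
    mul_le_mul_of_nonneg_right h6Q (show (0:ℝ) ≤ Qr^2/2 by positivity),
    mul_le_mul_of_nonneg_left hQr23 hδ0]

lemma scalar_6Q {Kr δ Qr : ℝ} (hδ0 : 0 ≤ δ) (hδK : 50 * Kr^3 * δ^2 < 1)
    (hKr : 2 ≤ Kr) (hQr1 : 1 ≤ Qr) (hQrK : Qr ≤ Kr) : 6 * δ * Qr ≤ 1 := by
  have h36 : 36 * Qr^2 ≤ 50 * Kr^3 := by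
    have h1 : Qr^2 ≤ Kr^2 := by nlinarith
    have h2 : 0 ≤ Kr^2*(50*Kr-36) := by nlinarith [sq_nonneg Kr]
    nlinarith [h1, h2]
  have h1 : 36 * δ^2 * Qr^2 ≤ 50 * Kr^3 * δ^2 := by nlinarith [sq_nonneg δ]
  have ha0 : 0 ≤ 6 * δ * Qr := by positivity
  nlinarith [sq_nonneg (6*δ*Qr - 1)]

lemma scalar_frac {δ u : ℝ} (hδ0 : 0 ≤ δ) : (1-δ) * u^2 / (1+δ)^2 ≤ u^2 := by
  have h1δ2 : (0:ℝ) < (1+δ)^2 := by positivity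
  rw [div_le_iff₀ h1δ2]
  nlinarith [mul_nonneg (sq_nonneg u) (show (0:ℝ) ≤ 3*δ+δ^2 by positivity)]

lemma cube_mono {a : ℝ} (ha : 0 ≤ a) : a^3 ≤ (a+1)^3 := by nlinarith [sq_nonneg a]

end Scalars
section Core
variable {M N : ℕ}

set_option maxHeartbeats 2000000 in
lemma core_gap {Φ : Matrix (Fin M) (Fin N) ℝ} {K Kbar : ℕ} {x : Fin N → ℝ}
    {σ : Fin K → Fin N} {α δ : ℝ} {d h : Fin N → ℝ}
    (hK2 : 2 ≤ K) (hKKbar : K ≤ Kbar)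
    (hxK : sparsity x = K)
    (hα : α = Real.sqrt (6 * (l2norm x) ^ 2 / ((K : ℝ) * (K + 1) * (2 * K + 1))))
    (hσinj : Function.Injective σ)
    (hσsupp : ∀ i, x i ≠ 0 ↔ ∃ j, σ j = i)
    (hσval : ∀ j : Fin K, |x (σ j)| = α * ((j : ℕ) + 1))
    (hδ0 : 0 ≤ δ) (hRIC : HasRIC Φ (2 * Kbar + K) δ)
    (hδ : δ < 1 / (1 + (3 + 5 * (K : ℝ)) * Real.sqrt (2 * K)))
    (hdsp : sparsity d ≤ Kbar + K)
    (hΦd : n2 (Φ.mulVec d) ≤ (1 + δ) * n2 x)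
    (hh : ∀ i, h i - x i = Φ.transpose.mulVec (Φ.mulVec d) i - d i)
    {k k' : ℕ} {Λ Λ' : Finset (Fin N)} {xe xe' : Fin N → ℝ}
    (hkk' : k < k') (hkK : k < K) (hk'bar : k' ≤ Kbar)
    (hTop : IsTopSupport h k Λ) (hTop' : IsTopSupport h k' Λ')
    (hLSE : IsLSE Φ (Φ.mulVec x) Λ xe) (hLSE' : IsLSE Φ (Φ.mulVec x) Λ' xe') :
    (6 * (1 - δ) * (l2norm x) ^ 2 / ((1 + δ) ^ 2 * (K : ℝ) * (K + 1) * (2 * K + 1))) *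
        (aK K δ - (K : ℝ) * bC δ) ^ 2
      ≤ (l2norm (Φ.mulVec x - Φ.mulVec xe)) ^ 2
          - (l2norm (Φ.mulVec x - Φ.mulVec xe')) ^ 2 := by
  have hKbar1 : 1 ≤ Kbar := by omega
  have hKr : (2:ℝ) ≤ (K:ℝ) := by exact_mod_cast hK2
  set D : ℝ := (K : ℝ) * ((K:ℝ) + 1) * (2 * (K:ℝ) + 1) with hD
  have hKpos : (0:ℝ) < (K:ℝ) := by linarith only [hKr]
  have hDpos : 0 < D := by rw [hD]; positivity
  have hP0 : 0 ≤ n2 x := n2_nonneg x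
  have hPpos : 0 < n2 x := by
    rcases eq_or_lt_of_le hP0 with heq | hlt
    · exfalso
      have hx0 : x = 0 := n2_eq_zero heq.symm
      rw [hx0] at hxK
      simp [sparsity] at hxK
      omega
    · exact hlt
  have hα0 : 0 ≤ α := hα ▸ Real.sqrt_nonneg _
  have hα2 : α ^ 2 = 6 * n2 x / D := by
    rw [hα, Real.sq_sqrt (by positivity), l2_sq]
  have hαpos : 0 < α := by
    rcases eq_or_lt_of_le hα0 with heq | h'
    · exfalso
      have : (0:ℝ) = 6 * n2 x / D := by rw [← hα2, ← heq]; ring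
      have h6 : 0 < 6 * n2 x / D := by positivity
      linarith only [this, h6]
    · exact h'
  -- signal energy identity
  set g : ℕ → ℝ := fun r => ((r:ℝ) + 1) ^ 2 with hg
  have hg0 : ∀ n, 0 ≤ g n := fun n => sq_nonneg _
  have hgmono : Monotone g := by
    intro a b hab
    rw [hg]
    simp only
    have hcast : (a:ℝ) + 1 ≤ (b:ℝ) + 1 := by
      have : (a:ℝ) ≤ (b:ℝ) := by exact_mod_cast hab
      linarith only [this]
    exact pow_le_pow_left₀ (by positivity) hcast 2
  set SK : ℝ := ∑ r ∈ Finset.range K, g r with hSK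
  have hsuppx : suppF x = Finset.univ.image σ := by
    ext i
    rw [mem_suppF, Finset.mem_image]
    constructor
    · intro hi; obtain ⟨j, hj⟩ := (hσsupp i).1 hi; exact ⟨j, Finset.mem_univ j, hj⟩
    · intro ⟨j, _, hj⟩; exact (hσsupp i).2 ⟨j, hj⟩
  have hPSK : n2 x = α ^ 2 * SK := by
    have e1 : n2 x = ∑ i ∈ suppF x, x i ^ 2 := by
      rw [n2]
      refine (Finset.sum_subset (Finset.subset_univ _) fun i _ hi => ?_).symm
      rw [mem_suppF] at hi
      push_neg at hi
      rw [hi]; ring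
    have e2 : ∑ i ∈ Finset.univ.image σ, x i ^ 2 = ∑ j : Fin K, x (σ j) ^ 2 :=
      Finset.sum_image fun a _ b _ hab => hσinj hab
    have e3 : ∀ j : Fin K, x (σ j) ^ 2 = α ^ 2 * g (j : ℕ) := by
      intro j
      rw [← sq_abs, hσval j, hg]
      ring
    rw [e1, hsuppx, e2]
    simp only [e3]
    rw [← Finset.mul_sum, hSK, Fin.sum_univ_eq_sum_range (fun r => g r) K]
  -- delta numerics
  set s2K : ℝ := Real.sqrt (2 * K) with hs2K
  have hs2K0 : 0 ≤ s2K := Real.sqrt_nonneg _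
  have hs2Ksq : s2K ^ 2 = 2 * K := Real.sq_sqrt (by positivity)
  have hδden : (0:ℝ) < 1 + (3 + 5 * K) * s2K := by
    have : 0 ≤ (3 + 5 * (K:ℝ)) * s2K := by positivity
    linarith only [this]
  have hδ1 : δ * (1 + (3 + 5 * (K:ℝ)) * s2K) < 1 := by
    rw [lt_div_iff₀ hδden] at hδ
    exact hδ
  obtain ⟨hδK, hδ20⟩ := scalar_deltaK hKr hs2K0 hs2Ksq hδ0 hδ1
  have h1δ : (0:ℝ) < 1 - δ := by linarith only [hδ20]
  -- bound on n2 d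
  have hnd : (1 - δ) * n2 d ≤ (1 + δ) * n2 x := by
    calc (1 - δ) * n2 d ≤ n2 (Φ.mulVec d) := ric_lower hRIC (by omega)
      _ ≤ (1 + δ) * n2 x := hΦd
  set ed : ℝ := δ * Real.sqrt (n2 d) with hed
  have hed0 : 0 ≤ ed := by positivity
  have hedsq : ed ^ 2 = δ ^ 2 * n2 d := by
    rw [hed, mul_pow, Real.sq_sqrt (n2_nonneg d)]
  have hSK3 : SK ≤ (K:ℝ)^3 := sum_sq_le_cube K
  have h2ed : 2 * ed < α := by
    have hstep : (2 * ed)^2 * (1 - δ) < α ^ 2 * (1 - δ) := by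
      have e1 : (2 * ed)^2 * (1 - δ) = 4 * δ^2 * ((1 - δ) * n2 d) := by
        rw [mul_pow, hedsq]; ring
      have e2 : 4 * δ^2 * ((1 - δ) * n2 d) ≤ 4 * δ^2 * ((1 + δ) * n2 x) :=
        mul_le_mul_of_nonneg_left hnd (by positivity)
      have e3 : 4 * δ^2 * ((1 + δ) * n2 x) = 4 * (1 + δ) * (α^2 * (δ^2 * SK)) := by
        rw [hPSK]; ring
      have e4 : δ^2 * SK ≤ δ^2 * (K:ℝ)^3 := mul_le_mul_of_nonneg_left hSK3 (sq_nonneg δ)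
      have hα2pos : 0 < α^2 := pow_pos hαpos 2
      have e5 : 4 * (1 + δ) * (α^2 * (δ^2 * (K:ℝ)^3)) < α^2 * (1 - δ) := by
        have hs : 4 * (1 + δ) * (δ^2 * (K:ℝ)^3) < 1 - δ := scalar_ed hδ0 hδK hδ20 hKr
        have h' := mul_lt_mul_of_pos_left hs hα2pos
        calc 4 * (1 + δ) * (α^2 * (δ^2 * (K:ℝ)^3)) = α^2 * (4 * (1 + δ) * (δ^2 * (K:ℝ)^3)) := by
              ring
          _ < α^2 * (1 - δ) := h'
      have h1d : (0:ℝ) ≤ 4 * (1 + δ) * α^2 := by positivity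
      have e45 : 4 * (1 + δ) * (α^2 * (δ^2 * SK)) ≤ 4 * (1 + δ) * (α^2 * (δ^2 * (K:ℝ)^3)) := by
        have hmm := mul_le_mul_of_nonneg_left e4 h1d
        calc 4 * (1 + δ) * (α^2 * (δ^2 * SK)) = 4 * (1 + δ) * α^2 * (δ^2 * SK) := by ring
          _ ≤ 4 * (1 + δ) * α^2 * (δ^2 * (K:ℝ)^3) := hmm
          _ = 4 * (1 + δ) * (α^2 * (δ^2 * (K:ℝ)^3)) := by ring
      calc (2 * ed)^2 * (1 - δ) = 4 * δ^2 * ((1 - δ) * n2 d) := e1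
        _ ≤ 4 * δ^2 * ((1 + δ) * n2 x) := e2
        _ = 4 * (1 + δ) * (α^2 * (δ^2 * SK)) := e3
        _ ≤ 4 * (1 + δ) * (α^2 * (δ^2 * (K:ℝ)^3)) := e45
        _ < α^2 * (1 - δ) := e5
    have h2 : (2*ed)^2 < α^2 := lt_of_mul_lt_mul_right hstep h1δ.le
    by_contra hge
    push_neg at hge
    have hple := pow_le_pow_left₀ hαpos.le hge 2
    linarith only [hple, h2]
  have hEB : ∀ i, |h i - x i| ≤ ed := by
    intro i
    rw [hh i, hed]
    exact entry_bound hRIC (by omega) i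
  have hcap' := capture_lemma hσsupp hσval hσinj hα0 hed0 hEB h2ed hTop'
  -- lower bound on E for Λ
  set Q : ℕ := K - k with hQdef
  set q : ℕ := K - k - 1 with hqdef
  have hQq : Q = q + 1 := by omega
  set J := Finset.univ.filter (fun j : Fin K => σ j ∉ Λ) with hJ
  have hJcard : Q ≤ J.card := by
    have hJc : (Finset.univ.filter (fun j : Fin K => σ j ∈ Λ)).card ≤ Λ.card := by
      refine Finset.card_le_card_of_injOn σ ?_ ?_
      · intro j hj; exact (Finset.mem_filter.1 hj).2
      · exact Function.Injective.injOn hσinj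
    rw [hTop.1] at hJc
    have hsplit := Finset.card_filter_add_card_filter_not
      (s := (Finset.univ : Finset (Fin K))) (p := fun j => σ j ∈ Λ)

    rw [Finset.card_univ, Fintype.card_fin] at hsplit
    have hsplit' : (Finset.univ.filter (fun j : Fin K => σ j ∈ Λ)).card + J.card = K := by
      rw [hJ]; simpa using hsplit
    omega
  have hf2mono : Monotone (fun r => α^2 * g r) := fun a b hab =>
    mul_le_mul_of_nonneg_left (hgmono hab) (sq_nonneg α)
  have hf20 : ∀ n, 0 ≤ α^2 * g n := fun n => mul_nonneg (sq_nonneg α) (hg0 n)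
  have hmiss : ∑ r ∈ Finset.range Q, (α^2 * g r) ≤ ∑ j ∈ J, α^2 * g (j:ℕ) :=
    sum_range_le_sum_fin hf2mono hf20 Q J hJcard
  have hsumJ : ∑ j ∈ J, α^2 * g (j:ℕ) ≤ n2 (x - xe) := by
    have hval : ∀ j ∈ J, α^2 * g (j:ℕ) = ((x - xe) (σ j))^2 := by
      intro j hj
      rw [hJ, Finset.mem_filter] at hj
      have hxe0 : xe (σ j) = 0 := by
        by_contra hne
        exact hj.2 (hLSE.1 (mem_suppF.2 hne))
      have hdiff : (x - xe) (σ j) = x (σ j) := by simp [hxe0]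
      have hgoal : ((x - xe) (σ j))^2 = α^2 * g (j:ℕ) := by
        rw [hdiff, ← sq_abs (x (σ j)), hσval j, hg]; ring
      exact hgoal.symm
    calc ∑ j ∈ J, α^2 * g (j:ℕ)
        = ∑ j ∈ J, ((x - xe) (σ j))^2 := Finset.sum_congr rfl hval
      _ = ∑ i ∈ J.image σ, ((x - xe) i)^2 :=
          (Finset.sum_image (g := σ) (f := fun i => ((x - xe) i)^2)
            (fun a _ b _ hab => hσinj hab)).symm
      _ ≤ n2 (x - xe) := by
          rw [n2]
          exact Finset.sum_le_sum_of_subset_of_nonneg (Finset.subset_univ _)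
            (fun i _ _ => sq_nonneg _)
  have hspxe : sparsity (x - xe) ≤ 2 * Kbar + K := by
    have h1 : suppF (x - xe) ⊆ suppF x ∪ suppF xe := suppF_sub_subset x xe
    have h2 : sparsity (x - xe) ≤ (suppF x ∪ suppF xe).card := sparsity_le_of_suppF h1
    have h3 : (suppF x ∪ suppF xe).card ≤ (suppF x).card + (suppF xe).card :=
      Finset.card_union_le _ _
    have h4 : (suppF x).card = K := hxK
    have h5 : (suppF xe).card ≤ k := by
      have := Finset.card_le_card hLSE.1
      rwa [hTop.1] at this
    omega
  have hElow : (1 - δ) * ∑ r ∈ Finset.range Q, (α^2 * g r) ≤ n2 (Φ.mulVec (x - xe)) := by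
    calc (1 - δ) * ∑ r ∈ Finset.range Q, (α^2 * g r)
        ≤ (1 - δ) * n2 (x - xe) :=
          mul_le_mul_of_nonneg_left (le_trans hmiss hsumJ) (le_of_lt h1δ)
      _ ≤ n2 (Φ.mulVec (x - xe)) := ric_lower hRIC hspxe
  -- upper estimate for Λ'
  set z : Fin N → ℝ := restr x Λ' with hz
  have hsuppz : suppF z ⊆ Λ' := by
    intro i hi
    rw [mem_suppF, hz, restr] at hi
    by_contra hiL
    simp [hiL] at hi
  have hEup1 : n2 (Φ.mulVec x - Φ.mulVec xe') ≤ n2 (Φ.mulVec x - Φ.mulVec z) := by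
    have hle := hLSE'.2 z hsuppz
    have hsq := pow_le_pow_left₀ (l2_nonneg _) hle 2
    rwa [l2_sq, l2_sq] at hsq
  have hsuppxz : suppF (x - z) ⊆ suppF x := by
    intro i hi
    rw [mem_suppF] at hi ⊢
    intro hx0
    apply hi
    simp [Pi.sub_apply, hz, restr, hx0]
  have hspxz : sparsity (x - z) ≤ 2 * Kbar + K := by
    have h1 := sparsity_le_of_suppF hsuppxz
    have h4 : (suppF x).card = K := hxK
    omega
  have hxz : n2 (x - z) ≤ ∑ r ∈ Finset.range q, (α^2 * g r) := by
    set T' := (Finset.univ.filter (fun j : Fin K => (j:ℕ) < K - k')).image σ with hT'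
    have hzero : ∀ i ∈ (Finset.univ : Finset (Fin N)), i ∉ T' → ((x - z) i)^2 = 0 := by
      intro i _ hiT
      by_cases hx0 : x i = 0
      · have hz0 : z i = 0 := by rw [hz]; show restr x Λ' i = 0; rw [restr]; split <;> simp [hx0]
        rw [Pi.sub_apply, hx0, hz0]; ring
      · obtain ⟨j'', hj''⟩ := (hσsupp i).1 hx0
        by_cases hlt : (j'' : ℕ) < K - k'
        · exact absurd (hT' ▸ Finset.mem_image.2
            ⟨j'', Finset.mem_filter.2 ⟨Finset.mem_univ _, hlt⟩, hj''⟩) hiT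
        · push_neg at hlt
          have hmem : σ j'' ∈ Λ' := hcap' j'' hlt
          have hzx : z i = x i := by
            rw [hz]; show restr x Λ' i = x i; rw [restr, ← hj'']; simp [hmem]
          rw [Pi.sub_apply, hzx]; ring
    have e1 : n2 (x - z) = ∑ i ∈ T', ((x - z) i)^2 :=
      (Finset.sum_subset (Finset.subset_univ _) hzero).symm
    have e2 : ∀ i ∈ T', ((x - z) i)^2 ≤ (x i)^2 := by
      intro i _
      rw [Pi.sub_apply, hz]
      show (x i - restr x Λ' i)^2 ≤ (x i)^2
      rw [restr]
      split
      · simpa using sq_nonneg (x i)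
      · simp
    have e3 : ∑ i ∈ T', (x i)^2
        = ∑ j ∈ Finset.univ.filter (fun j : Fin K => (j:ℕ) < K - k'), (x (σ j))^2 := by
      rw [hT']
      exact Finset.sum_image (g := σ) (f := fun i => (x i)^2) (fun a _ b _ hab => hσinj hab)
    have e4 : ∀ j ∈ Finset.univ.filter (fun j : Fin K => (j:ℕ) < K - k'),
        (x (σ j))^2 = α^2 * g (j:ℕ) := by
      intro j _; rw [← sq_abs (x (σ j)), hσval j, hg]; ring
    have e5 : ∑ j ∈ Finset.univ.filter (fun j : Fin K => (j:ℕ) < K - k'), (α^2 * g (j:ℕ))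
        ≤ ∑ r ∈ Finset.range (K - k'), (α^2 * g r) := by
      apply sum_fin_le_sum_range hf20
      intro j hj; exact (Finset.mem_filter.1 hj).2
    have e6 : ∑ r ∈ Finset.range (K - k'), (α^2 * g r) ≤ ∑ r ∈ Finset.range q, (α^2 * g r) := by
      apply Finset.sum_le_sum_of_subset_of_nonneg
      · apply Finset.range_subset_range.2; omega
      · intro r _ _; exact hf20 r
    calc n2 (x - z) = ∑ i ∈ T', ((x - z) i)^2 := e1
      _ ≤ ∑ i ∈ T', (x i)^2 := Finset.sum_le_sum e2
      _ = ∑ j ∈ Finset.univ.filter (fun j : Fin K => (j:ℕ) < K - k'), (x (σ j))^2 := e3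
      _ = ∑ j ∈ Finset.univ.filter (fun j : Fin K => (j:ℕ) < K - k'), (α^2 * g (j:ℕ)) :=
          Finset.sum_congr rfl e4
      _ ≤ ∑ r ∈ Finset.range (K - k'), (α^2 * g r) := e5
      _ ≤ ∑ r ∈ Finset.range q, (α^2 * g r) := e6
  have hEup : n2 (Φ.mulVec x - Φ.mulVec xe') ≤ (1 + δ) * ∑ r ∈ Finset.range q, (α^2 * g r) := by
    calc n2 (Φ.mulVec x - Φ.mulVec xe') ≤ n2 (Φ.mulVec x - Φ.mulVec z) := hEup1
      _ = n2 (Φ.mulVec (x - z)) := by rw [Matrix.mulVec_sub]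
      _ ≤ (1 + δ) * n2 (x - z) := ric_upper hRIC hspxz
      _ ≤ (1 + δ) * ∑ r ∈ Finset.range q, (α^2 * g r) :=
          mul_le_mul_of_nonneg_left hxz (by linarith only [hδ0])
  -- scalar arithmetic
  set Sq : ℝ := ∑ r ∈ Finset.range q, g r with hSq
  set Qr : ℝ := (q:ℝ) + 1 with hQr
  have hsumQ : ∑ r ∈ Finset.range Q, (α^2 * g r) = α^2 * (Sq + Qr^2) := by
    rw [hQq, Finset.sum_range_succ, ← Finset.mul_sum]
    have : g q = Qr^2 := by rw [hg, hQr]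
    rw [this]; ring
  have hsumq : ∑ r ∈ Finset.range q, (α^2 * g r) = α^2 * Sq := by
    rw [← Finset.mul_sum]
  have hQr1 : (1:ℝ) ≤ Qr := by
    rw [hQr]; have hq0 : (0:ℝ) ≤ (q:ℝ) := Nat.cast_nonneg q; linarith only [hq0]
  have hQrK : Qr ≤ (K:ℝ) := by
    rw [hQr]
    have hqK : (q:ℕ) + 1 ≤ K := by omega
    exact_mod_cast hqK
  have hSg0 : (0:ℝ) ≤ Sq := Finset.sum_nonneg fun r _ => hg0 r
  have hSg3 : Sq ≤ Qr^3 := by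
    refine le_trans (sum_sq_le_cube q) ?_
    rw [hQr]
    exact cube_mono (Nat.cast_nonneg q)
  have h6Q : 6 * δ * Qr ≤ 1 := scalar_6Q hδ0 hδK hKr hQr1 hQrK
  have hkey : 1/2 ≤ (1 - δ) * (Sq + Qr^2) - (1 + δ) * Sq :=
    scalar_key hδ0 hQr1 hSg0 hSg3 h6Q
  -- bounds on u
  set u : ℝ := aK K δ - (K:ℝ) * bC δ with hu
  have hsqrtK : (0:ℝ) < Real.sqrt K := Real.sqrt_pos.2 (by positivity)
  have hsqrtKsq : Real.sqrt K ^ 2 = (K:ℝ) := Real.sq_sqrt (by positivity)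
  have hs2 : s2K = Real.sqrt 2 * Real.sqrt K := by
    rw [hs2K]; exact Real.sqrt_mul (by norm_num) K
  have hsqrt2 : (0:ℝ) ≤ Real.sqrt 2 := Real.sqrt_nonneg 2
  have hupos : 0 < u := by
    rw [hu, aK, bC]
    have key : (3 + 5*(K:ℝ)) * s2K * δ < 1 - δ := by
      have expand : δ * (1 + (3 + 5 * (K:ℝ)) * s2K) = δ + (3 + 5*(K:ℝ)) * s2K * δ := by ring
      linarith only [hδ1, expand.symm.le, expand.le]
    rw [hs2] at key
    have hlt : 3*Real.sqrt 2*δ + (K:ℝ)*(5*Real.sqrt 2*δ) < (1-δ)/Real.sqrt K := by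
      rw [lt_div_iff₀ hsqrtK]
      calc (3*Real.sqrt 2*δ + (K:ℝ)*(5*Real.sqrt 2*δ)) * Real.sqrt K
          = (3 + 5*(K:ℝ)) * (Real.sqrt 2 * Real.sqrt K) * δ := by ring
        _ < 1 - δ := key
    linarith only [hlt]
  have huleaK : u ≤ 1 / Real.sqrt K := by
    rw [hu, aK, bC]
    have h1 : (1-δ)/Real.sqrt K ≤ 1/Real.sqrt K := by
      exact (div_le_div_iff_of_pos_right hsqrtK).2 (by linarith only [hδ0])
    have h2 : 0 ≤ 3*Real.sqrt 2*δ := by positivity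
    have h3 : 0 ≤ (K:ℝ)*(5*Real.sqrt 2*δ) := by positivity
    linarith only [h1, h2, h3]
  have hu2 : u^2 ≤ 1/(K:ℝ) := by
    have hp := pow_le_pow_left₀ (le_of_lt hupos) huleaK 2
    calc u^2 ≤ (1/Real.sqrt K)^2 := hp
      _ = 1/(K:ℝ) := by rw [div_pow, one_pow, hsqrtKsq]
  -- final combination
  simp only [l2_sq]
  have hE1 : (1-δ) * (α^2 * (Sq + Qr^2)) ≤ n2 (Φ.mulVec x - Φ.mulVec xe) := by
    rw [← Matrix.mulVec_sub, ← hsumQ]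
    exact hElow
  have hE2 : n2 (Φ.mulVec x - Φ.mulVec xe') ≤ (1+δ) * (α^2 * Sq) := by
    rw [← hsumq]
    exact hEup
  have h1δ2 : (0:ℝ) < (1+δ)^2 := by positivity
  have hfrac : (1-δ) * u^2 / (1+δ)^2 ≤ u^2 := scalar_frac hδ0
  have hTeq : 6 * (1 - δ) * n2 x / ((1 + δ) ^ 2 * (K:ℝ) * ((K:ℝ) + 1) * (2 * (K:ℝ) + 1)) * u ^ 2
      = α^2 * ((1-δ) * u^2 / (1+δ)^2) := by
    rw [hα2, hD]
    field_simp
  have hhalf : (1:ℝ)/(K:ℝ) ≤ 1/2 := one_div_le_one_div_of_le (by norm_num) hKr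
  calc 6 * (1 - δ) * n2 x / ((1 + δ) ^ 2 * (K:ℝ) * ((K:ℝ) + 1) * (2 * (K:ℝ) + 1)) * u ^ 2
      = α^2 * ((1-δ) * u^2 / (1+δ)^2) := hTeq
    _ ≤ α^2 * u^2 := mul_le_mul_of_nonneg_left hfrac (sq_nonneg α)
    _ ≤ α^2 * (1/2) := by
        have := le_trans hu2 hhalf
        exact mul_le_mul_of_nonneg_left this (sq_nonneg α)
    _ ≤ α^2 * ((1 - δ) * (Sq + Qr^2) - (1 + δ) * Sq) :=
        mul_le_mul_of_nonneg_left hkey (sq_nonneg α)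
    _ = (1-δ) * (α^2 * (Sq + Qr^2)) - (1+δ) * (α^2 * Sq) := by ring
    _ ≤ n2 (Φ.mulVec x - Φ.mulVec xe) - n2 (Φ.mulVec x - Φ.mulVec xe') := by
        linarith only [hE1, hE2]
end Core
lemma fin_two_cases (i : Fin 2) : i = 0 ∨ i = 1 := by
  fin_cases i
  · exact Or.inl rfl
  · exact Or.inr rfl

/-- Phase-I guarantee of MCHTP for a signal with a linear profile,
whose `K` nonzero entries have magnitudes `α, 2α, …, Kα` with
`α = √(6‖x‖²/(K(K+1)(2K+1)))`. -/
theorem mchtp_phaseI_linear_signal {M N : ℕ} (A : MCHTP M N) (hA : A.Valid)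
    (K : ℕ) (hK2 : 2 ≤ K) (hKKbar : K ≤ A.Kbar)
    (x : Fin N → ℝ) (hy : A.y = A.Phi.mulVec x) (hxK : sparsity x = K)
    (α : ℝ)
    (hα : α = Real.sqrt (6 * (l2norm x) ^ 2 / ((K : ℝ) * (K + 1) * (2 * K + 1))))
    (σ : Fin K → Fin N) (hσinj : Function.Injective σ)
    (hσsupp : ∀ i, x i ≠ 0 ↔ ∃ j, σ j = i)
    (hσval : ∀ j : Fin K, |x (σ j)| = α * ((j : ℕ) + 1))
    (δ : ℝ) (hδ0 : 0 ≤ δ) (hRIC : HasRIC A.Phi (2 * A.Kbar + K) δ)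
    (hδ : δ < 1 / (1 + (3 + 5 * (K : ℝ)) * Real.sqrt (2 * K)))
    (hε : A.eps <
      (6 * (1 - δ) * (l2norm x) ^ 2 / ((1 + δ) ^ 2 * (K : ℝ) * (K + 1) * (2 * K + 1))) *
        (aK K δ - (K : ℝ) * bC δ) ^ 2) :
    ∀ t, 1 ≤ t → min (A.Kti t 0) (A.Kti t 1) < K →
      A.eps < A.dE t ∧ A.Ksel t = max (A.Kti t 0) (A.Kti t 1) := by
  obtain ⟨hx0, hK0, hεpos, hstep⟩ := hA
  -- Ksel stays below Kbar
  have hKselle : ∀ t, A.Ksel t ≤ A.Kbar := by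
    intro t
    induction t with
    | zero => rw [hK0]; exact Nat.zero_le _
    | succ n ih =>
      obtain ⟨⟨hsam, _⟩, _, _, hKsel, _⟩ := hstep (n+1) (by omega)
      rw [hKsel]
      by_cases hi : A.isel (n+1) = 0
      · rw [MCHTP.Kti, if_pos hi]
        simpa using ih
      · rw [MCHTP.Kti, if_neg hi]
        exact (Finset.mem_Icc.1 (Finset.mem_Icc.2 (Finset.mem_Icc.1 hsam))).2
  intro t ht hmin
  obtain ⟨⟨hsam, hsamne⟩, htops, hsel, hKsel, _⟩ := hstep t ht
  set v : Fin N → ℝ := A.xsel (t-1) with hv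
  -- facts about the previous iterate
  have hvfacts : sparsity v ≤ A.Kbar ∧
      l2norm (A.y - A.Phi.mulVec v) ≤ l2norm A.y := by
    rcases eq_or_lt_of_le ht with h1 | h2
    · have ht1 : t = 1 := h1.symm
      have hv0 : v = 0 := by rw [hv, ht1]; simpa using hx0
      constructor
      · rw [hv0]; simp [sparsity]
      · rw [hv0, Matrix.mulVec_zero]; simp
    · have ht2 : 1 ≤ t - 1 := by omega
      obtain ⟨_, htops', _, hKsel', hxsel'⟩ := hstep (t-1) ht2
      have hLSEv := (htops' (A.isel (t-1))).2
      have hTopv := (htops' (A.isel (t-1))).1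
      constructor
      · have hsupp : suppF v ⊆ A.Lam (t-1) (A.isel (t-1)) := by
          rw [hv, hxsel']; exact hLSEv.1
        have h1 := sparsity_le_of_suppF hsupp
        rw [hTopv.1] at h1
        rw [← hKsel'] at h1
        exact le_trans h1 (hKselle (t-1))
      · have h0 : suppF (0 : Fin N → ℝ) ⊆ A.Lam (t-1) (A.isel (t-1)) := by
          intro i hi
          rw [mem_suppF] at hi
          simp at hi
        have := hLSEv.2 0 h0
        rw [Matrix.mulVec_zero, sub_zero] at this
        rw [hv, hxsel']
        exact this
  set d : Fin N → ℝ := x - v with hd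
  have hdsp : sparsity d ≤ A.Kbar + K := by
    have h1 : suppF d ⊆ suppF x ∪ suppF v := by rw [hd]; exact suppF_sub_subset x v
    have h2 := sparsity_le_of_suppF h1
    have h3 : (suppF x ∪ suppF v).card ≤ (suppF x).card + (suppF v).card :=
      Finset.card_union_le _ _
    have h4 : (suppF x).card = K := hxK
    have h5 : (suppF v).card ≤ A.Kbar := hvfacts.1
    omega
  have hΦd : n2 (A.Phi.mulVec d) ≤ (1 + δ) * n2 x := by
    have e1 : A.Phi.mulVec d = A.y - A.Phi.mulVec v := by
      rw [hd, Matrix.mulVec_sub, hy]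
    have e2 := hvfacts.2
    have e3 := pow_le_pow_left₀ (l2_nonneg _) e2 2
    rw [l2_sq, l2_sq] at e3
    rw [e1]
    calc n2 (A.y - A.Phi.mulVec v) ≤ n2 A.y := e3
      _ = n2 (A.Phi.mulVec x) := by rw [hy]
      _ ≤ (1 + δ) * n2 x := ric_upper hRIC (by omega)
  set hfun : Fin N → ℝ :=
    A.xsel (t-1) + A.Phi.transpose.mulVec (A.y - A.Phi.mulVec (A.xsel (t-1))) with hhfun
  have hh : ∀ i, hfun i - x i = A.Phi.transpose.mulVec (A.Phi.mulVec d) i - d i := by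
    intro i
    have e1 : A.y - A.Phi.mulVec v = A.Phi.mulVec d := by
      rw [hd, Matrix.mulVec_sub, hy]
    rw [hhfun, ← hv, e1]
    simp only [Pi.add_apply, Pi.sub_apply, hd]
    ring
  have hKti0 : A.Kti t 0 = A.Ksel (t-1) := by rw [MCHTP.Kti]; simp
  have hKti1 : A.Kti t 1 = A.Ksam t := by rw [MCHTP.Kti]; simp
  have hk0bar : A.Kti t 0 ≤ A.Kbar := by rw [hKti0]; exact hKselle (t-1)
  have hk1bar : A.Kti t 1 ≤ A.Kbar := by rw [hKti1]; exact (Finset.mem_Icc.1 hsam).2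
  have hne01 : A.Kti t 0 ≠ A.Kti t 1 := by
    rw [hKti0, hKti1]
    exact fun hcon => hsamne hcon.symm
  have hEeq : ∀ i, A.E t i = (l2norm (A.Phi.mulVec x - A.Phi.mulVec (A.xint t i)))^2 := by
    intro i
    rw [MCHTP.E, hy]
  have hLSE' : ∀ i, IsLSE A.Phi (A.Phi.mulVec x) (A.Lam t i) (A.xint t i) := by
    intro i
    have := (htops i).2
    rwa [hy] at this
  rcases Nat.lt_or_ge (A.Kti t 0) (A.Kti t 1) with hlt | hge
  · -- K_{t,0} < K_{t,1} : index 0 has the smaller sparsity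
    have hminK : A.Kti t 0 < K := by
      rw [min_eq_left (le_of_lt hlt)] at hmin
      exact hmin
    have gap := core_gap hK2 hKKbar hxK hα hσinj hσsupp hσval hδ0 hRIC hδ hdsp hΦd hh
      hlt hminK hk1bar (htops 0).1 (htops 1).1 (hLSE' 0) (hLSE' 1)
    rw [← hEeq 0, ← hEeq 1] at gap
    have hgap : A.eps < A.E t 0 - A.E t 1 := lt_of_lt_of_le hε gap
    have hdE : A.eps < A.dE t := by
      rw [MCHTP.dE]
      calc A.eps < A.E t 0 - A.E t 1 := hgap
        _ ≤ |A.E t 0 - A.E t 1| := le_abs_self _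
        _ = |A.E t 1 - A.E t 0| := abs_sub_comm _ _
    refine ⟨hdE, ?_⟩
    have hargmin := hsel.1 hdE
    have hisel : A.isel t = 1 := by
      rcases fin_two_cases (A.isel t) with h0 | h1
      · exfalso
        have := hargmin 1
        rw [h0] at this
        have hε0 : 0 < A.eps := hεpos
        linarith only [this, hgap, hε0]
      · exact h1
    rw [hKsel, hisel, Nat.max_eq_right (le_of_lt hlt)]
  · -- K_{t,1} < K_{t,0}
    have hlt' : A.Kti t 1 < A.Kti t 0 := lt_of_le_of_ne hge (Ne.symm hne01)
    have hminK : A.Kti t 1 < K := by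
      rw [min_eq_right (le_of_lt hlt')] at hmin
      exact hmin
    have gap := core_gap hK2 hKKbar hxK hα hσinj hσsupp hσval hδ0 hRIC hδ hdsp hΦd hh
      hlt' hminK hk0bar (htops 1).1 (htops 0).1 (hLSE' 1) (hLSE' 0)
    rw [← hEeq 1, ← hEeq 0] at gap
    have hgap : A.eps < A.E t 1 - A.E t 0 := lt_of_lt_of_le hε gap
    have hdE : A.eps < A.dE t := by
      rw [MCHTP.dE]
      calc A.eps < A.E t 1 - A.E t 0 := hgap
        _ ≤ |A.E t 1 - A.E t 0| := le_abs_self _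
    refine ⟨hdE, ?_⟩
    have hargmin := hsel.1 hdE
    have hisel : A.isel t = 0 := by
      rcases fin_two_cases (A.isel t) with h0 | h1
      · exact h0
      · exfalso
        have := hargmin 0
        rw [h1] at this
        have hε0 : 0 < A.eps := hεpos
        linarith only [this, hgap, hε0]
    rw [hKsel, hisel, Nat.max_eq_left (le_of_lt hlt')]
end
end
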